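/- arXiv:2401.02111 — 10 statements merged into one kernel-verified Lean document; each statement's English description precedes it below -/
import Mathlib

section
/- Let I = ((x_1 x_n)^{w_1}, ..., (x_{n-1} x_n)^{w_{n-1}}) ⊆ S = K[x_1,...,x_n] be the edge ideal of an edge-weighted star graph with w_1 ≥ w_2 ≥ ... ≥ w_{n-1} ≥ 1. Then for any t ≥ 2, the colon ideal (I^t : (x_{n-1} x_n)^{w_{n-1}}) equals I^{t-1}. -/
/-!
All ideals involved are monomial ideals, so membership is decided on exponent vectors: the
exponents of `Iᵗ` are the nonnegative combinations of `t` generator exponents. Let `g` be the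
generator of smallest weight, living on the leaf `x_{n-1}` and the centre. If a combination of
`t + 1` generators lies below `μ + exp g`, remove one generator: `g` itself if it occurs, and
otherwise any one, `h`. In the second case no remaining generator involves `x_{n-1}`, and away
from `x_{n-1}` the exponent of `g` is at most that of `h`, so what remains lies below `μ`.
-/

namespace Finsupp

variable {σ ι : Type*}

theorem linearCombination_apply_eq_zero {E : ι → σ →₀ ℕ} {l : ι} {c : σ}
    (hc : ∀ i ≠ l, E i c = 0) {b : ι →₀ ℕ} (hb : b l = 0) :
    linearCombination ℕ E b c = 0 := by
  rw [linearCombination_apply, sum_apply]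
  refine Finset.sum_eq_zero fun i hi => ?_
  simp only [smul_apply, smul_eq_mul]
  rw [hc i (by rintro rfl; exact mem_support_iff.mp hi hb), mul_zero]

theorem exists_degree_eq_linearCombination_le {E : ι → σ →₀ ℕ} {l : ι} {c : σ}
    (hc : ∀ i ≠ l, E i c = 0) (hdom : ∀ j, ∀ k ≠ c, E l k ≤ E j k)
    {t : ℕ} {a : ι →₀ ℕ} (ha : a.degree = t + 1) {μ : σ →₀ ℕ}
    (hle : linearCombination ℕ E a ≤ μ + E l) :
    ∃ b : ι →₀ ℕ, b.degree = t ∧ linearCombination ℕ E b ≤ μ := by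
  classical
  obtain ⟨j, hj, hjl⟩ : ∃ j, a j ≠ 0 ∧ (a l = 0 ∨ j = l) := by
    by_cases hl : a l = 0
    · obtain ⟨j, hj⟩ := a.support_nonempty_iff.mpr (by rintro rfl; simp at ha)
      exact ⟨j, mem_support_iff.mp hj, .inl hl⟩
    · exact ⟨l, hl, .inr rfl⟩
  obtain ⟨b, rfl⟩ : ∃ b, a = b + single j 1 :=
    le_iff_exists_add'.mp (single_le_iff.mpr (Nat.one_le_iff_ne_zero.mpr hj))
  refine ⟨b, by simpa using ha, ?_⟩
  rw [map_add, linearCombination_single, one_smul] at hle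
  rcases hjl with hl | rfl
  · intro k
    by_cases hk : k = c
    · subst hk
      rw [linearCombination_apply_eq_zero hc (by simp_all)]
      exact Nat.zero_le _
    · have hle_k := hle k
      have hdom_k := hdom j k hk
      simp only [coe_add, Pi.add_apply] at *
      omega
  · exact le_of_add_le_add_right hle

end Finsupp

namespace MvPolynomial

open Finsupp

variable {R σ ι : Type*} [CommSemiring R]

theorem span_monomial_pow (E : ι → σ →₀ ℕ) (t : ℕ) :
    Ideal.span (Set.range fun i => monomial (E i) (1 : R)) ^ t =
      Ideal.span ((monomial · 1) '' (linearCombination ℕ E '' {a | a.degree = t})) := by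
  rw [← Set.image_univ, Ideal.span, Submodule.span_pow, image_pow_eq_finsuppProd_image,
    Set.image_image]
  simp [linearCombination_apply, monomial_finsupp_sum_index, monomial_pow]

theorem mem_span_monomial_pow_iff {E : ι → σ →₀ ℕ} {t : ℕ} {f : MvPolynomial σ R} :
    f ∈ Ideal.span (Set.range fun i => monomial (E i) (1 : R)) ^ t ↔
      ∀ μ ∈ f.support, ∃ a : ι →₀ ℕ, a.degree = t ∧ linearCombination ℕ E a ≤ μ := by
  simp [span_monomial_pow, mem_ideal_span_monomial_image]

theorem colon_span_monomial_pow_succ {E : ι → σ →₀ ℕ} {l : ι} {c : σ}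
    (hc : ∀ i ≠ l, E i c = 0) (hdom : ∀ j, ∀ k ≠ c, E l k ≤ E j k) (t : ℕ) :
    (Ideal.span (Set.range fun i => monomial (E i) (1 : R)) ^ (t + 1)).colon
        (Ideal.span {monomial (E l) (1 : R)} : Set (MvPolynomial σ R)) =
      Ideal.span (Set.range fun i => monomial (E i) (1 : R)) ^ t := by
  ext f
  rw [Ideal.mem_colon_span_singleton]
  constructor
  · intro hf
    rw [mem_span_monomial_pow_iff] at hf ⊢
    intro μ hμ
    obtain ⟨a, ha, hle⟩ := hf (μ + E l) (by simpa [coeff_mul_monomial] using hμ)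
    exact exists_degree_eq_linearCombination_le hc hdom ha hle
  · intro hf
    rw [pow_succ]
    exact Ideal.mul_mem_mul hf (Ideal.subset_span ⟨l, rfl⟩)

end MvPolynomial

open MvPolynomial

section Star

variable {m : ℕ} (w : Fin (m + 1) → ℕ)

noncomputable def starExponent (i : Fin (m + 1)) : Fin (m + 2) →₀ ℕ :=
  Finsupp.single i.castSucc (w i) + Finsupp.single (Fin.last (m + 1)) (w i)

theorem monomial_starExponent (R : Type*) [CommSemiring R] (i : Fin (m + 1)) :
    monomial (starExponent w i) (1 : R) = (X i.castSucc * X (Fin.last (m + 1))) ^ w i := by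
  rw [X, X, monomial_mul, monomial_pow, starExponent]
  simp [smul_add]

theorem starExponent_apply_castSucc_of_ne {i j : Fin (m + 1)} (h : i ≠ j) :
    starExponent w i j.castSucc = 0 := by
  simp [starExponent, h]

theorem starExponent_apply_le_of_le {i j : Fin (m + 1)} (h : w j ≤ w i) (k : Fin (m + 2))
    (hk : k ≠ j.castSucc) : starExponent w j k ≤ starExponent w i k := by
  simp only [starExponent, Finsupp.coe_add, Pi.add_apply, Finsupp.single_apply]
  split_ifs <;> omega

end Star

theorem star_colon_power_general (K : Type) [Field K] (m : ℕ) (w : Fin (m + 1) → ℕ)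
    (hmono : ∀ i j : Fin (m + 1), i ≤ j → w j ≤ w i)
    (t : ℕ) (ht : 2 ≤ t)
    (I : Ideal (MvPolynomial (Fin (m + 2)) K))
    (hI : I = Ideal.span (Set.range fun i : Fin (m + 1) =>
      (X i.castSucc * X (Fin.last (m + 1))) ^ w i)) :
    (I ^ t).colon ((Ideal.span
        {(X (Fin.last m).castSucc * X (Fin.last (m + 1))) ^ w (Fin.last m)} :
          Ideal (MvPolynomial (Fin (m + 2)) K)) : Set (MvPolynomial (Fin (m + 2)) K)) =
      I ^ (t - 1) := by
  obtain ⟨s, rfl⟩ : ∃ s, t = s + 1 := ⟨t - 1, by omega⟩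
  simp only [hI, ← monomial_starExponent, Nat.add_sub_cancel]
  exact colon_span_monomial_pow_succ (fun i hi => starExponent_apply_castSucc_of_ne w hi)
    (fun j => starExponent_apply_le_of_le w (hmono j _ (Fin.le_last j))) s

/-- for the weighted star edge ideal with `w_1 ≥ ⋯ ≥ w_{n-1} ≥ 1`,
`(I^t : (x_{n-1} x_n)^{w_{n-1}}) = I^{t-1}` for all `t ≥ 2`.
Here the star has `m+2` vertices with center `x_{m+2}`. -/
theorem star_colon_power (K : Type) [Field K] (m : ℕ) (w : Fin (m + 1) → ℕ)
    (hw : ∀ i, 1 ≤ w i) (hmono : ∀ i j : Fin (m + 1), i ≤ j → w j ≤ w i)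
    (t : ℕ) (ht : 2 ≤ t)
    (I : Ideal (MvPolynomial (Fin (m + 2)) K))
    (hI : I = Ideal.span (Set.range fun i : Fin (m + 1) =>
      (X i.castSucc * X (Fin.last (m + 1))) ^ w i)) :
    (I ^ t).colon ((Ideal.span
        {(X (Fin.last m).castSucc * X (Fin.last (m + 1))) ^ w (Fin.last m)} :
          Ideal (MvPolynomial (Fin (m + 2)) K)) : Set (MvPolynomial (Fin (m + 2)) K)) =
      I ^ (t - 1) :=
  star_colon_power_general K m w hmono t ht I hI
end

section
/- Let I = ((x_1 x_n)^{w_1}, ..., (x_{n-1} x_n)^{w_{n-1}}) ⊆ S = K[x_1,...,x_n] with w_1 ≥ w_2 ≥ ... ≥ w_{n-1} ≥ 1. Then for any t ≥ 2, the ideal ((I^t : x_{n-1}^{w_{n-1}}) + (x_n^{w_{n-1}})) equals (x_n^{w_{n-1}}). -/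
/-!
Every generator `(x_i x_n)^{w_i}` of `I` is divisible by `x_n^{w_{n-1}}`, because `w_{n-1}` is the
smallest weight; hence `I^t ⊆ I ⊆ (x_n^{w_{n-1}})`. If `f x_{n-1}^{w_{n-1}} ∈ I^t`, then the prime
`x_n` does not divide `x_{n-1}^{w_{n-1}}`, so `x_n^{w_{n-1}}` divides `f`.
-/

open MvPolynomial

theorem Ideal.span_range_mul_pow_le_span_singleton_pow {R ι : Type*} [CommSemiring R]
    (y : ι → R) (x : R) (w : ι → ℕ) {k : ℕ} (hk : ∀ i, k ≤ w i) :
    Ideal.span (Set.range fun i => (y i * x) ^ w i) ≤ Ideal.span {x ^ k} := by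
  rw [Ideal.span_le]
  rintro _ ⟨i, rfl⟩
  dsimp only
  rw [SetLike.mem_coe, Ideal.mem_span_singleton, mul_pow]
  exact (pow_dvd_pow x (hk i)).mul_left _

theorem Ideal.colon_span_singleton_le_span_singleton_pow {R : Type*} [CommSemiring R] [IsDomain R]
    {J : Ideal R} {p b : R} {n : ℕ} (hp : Prime p) (hb : ¬p ∣ b) (hJ : J ≤ Ideal.span {p ^ n}) :
    J.colon (Ideal.span {b} : Set R) ≤ Ideal.span {p ^ n} := by
  intro f hf
  rw [Ideal.mem_colon_span_singleton] at hf
  rw [Ideal.mem_span_singleton]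
  exact hp.pow_dvd_of_dvd_mul_right n hb (Ideal.mem_span_singleton.mp (hJ hf))

theorem MvPolynomial.not_X_dvd_X_pow {σ R : Type*} [CommRing R] [IsDomain R] {i j : σ}
    (hij : i ≠ j) (k : ℕ) : ¬(X i : MvPolynomial σ R) ∣ X j ^ k :=
  fun h => hij (X_dvd_X.mp (X_prime.dvd_of_dvd_pow h))

theorem star_colon_sup_general (K : Type) [Field K] (m : ℕ) (w : Fin (m + 1) → ℕ)
    (hmono : ∀ i j : Fin (m + 1), i ≤ j → w j ≤ w i)
    (t : ℕ) (ht : 2 ≤ t)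
    (I : Ideal (MvPolynomial (Fin (m + 2)) K))
    (hI : I = Ideal.span (Set.range fun i : Fin (m + 1) =>
      (X i.castSucc * X (Fin.last (m + 1))) ^ w i)) :
    ((I ^ t).colon ((Ideal.span {X ((Fin.last m).castSucc) ^ w (Fin.last m)} :
        Ideal (MvPolynomial (Fin (m + 2)) K)) : Set (MvPolynomial (Fin (m + 2)) K))) ⊔
        Ideal.span {X (Fin.last (m + 1)) ^ w (Fin.last m)} =
      Ideal.span {X (Fin.last (m + 1)) ^ w (Fin.last m)} := by
  have hI_le : I ≤ Ideal.span {X (Fin.last (m + 1)) ^ w (Fin.last m)} :=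
    hI ▸ Ideal.span_range_mul_pow_le_span_singleton_pow _ _ w fun i => hmono _ _ (Fin.le_last i)
  exact sup_eq_right.mpr <| Ideal.colon_span_singleton_le_span_singleton_pow X_prime
    (not_X_dvd_X_pow (Fin.castSucc_lt_last _).ne' _) ((Ideal.pow_le_self (by omega)).trans hI_le)

/-- for the weighted star edge ideal with `w_1 ≥ ⋯ ≥ w_{n-1} ≥ 1`,
`(I^t : x_{n-1}^{w_{n-1}}) + (x_n^{w_{n-1}}) = (x_n^{w_{n-1}})` for all `t ≥ 2`.
Here the star has `m+2` vertices with center `x_n = x_{m+2}` and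
`x_{n-1} = x_{m+1}` is the leaf of the last edge. -/
theorem star_colon_sup (K : Type) [Field K] (m : ℕ) (w : Fin (m + 1) → ℕ)
    (hw : ∀ i, 1 ≤ w i) (hmono : ∀ i j : Fin (m + 1), i ≤ j → w j ≤ w i)
    (t : ℕ) (ht : 2 ≤ t)
    (I : Ideal (MvPolynomial (Fin (m + 2)) K))
    (hI : I = Ideal.span (Set.range fun i : Fin (m + 1) =>
      (X i.castSucc * X (Fin.last (m + 1))) ^ w i)) :
    ((I ^ t).colon ((Ideal.span {X ((Fin.last m).castSucc) ^ w (Fin.last m)} :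
        Ideal (MvPolynomial (Fin (m + 2)) K)) : Set (MvPolynomial (Fin (m + 2)) K))) ⊔
        Ideal.span {X (Fin.last (m + 1)) ^ w (Fin.last m)} =
      Ideal.span {X (Fin.last (m + 1)) ^ w (Fin.last m)} :=
  star_colon_sup_general K m w hmono t ht I hI
end

section
/- Let G_w be a non-trivially edge-weighted graph (at least one edge has weight ≥ 2) whose edge ideal I(G_w) = ((x_i x_j)^{w(e)} : e = {x_i,x_j} ∈ E(G)) is integrally closed. If the underlying graph is a path on n vertices, then at most two edges of the path have weight ≥ 2. -/
open MvPolynomial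

/-- `f` is integral over the ideal `I`: it satisfies an equation
`f^k + c_1 f^{k-1} + ⋯ + c_k = 0` with `c_i ∈ I^i`. -/
def IsIntegralOverIdeal {R : Type} [CommRing R] (I : Ideal R) (f : R) : Prop :=
  ∃ k : ℕ, 0 < k ∧ ∃ c : ℕ → R, (∀ i ∈ Finset.Icc 1 k, c i ∈ I ^ i) ∧
    f ^ k + ∑ i ∈ Finset.Icc 1 k, c i * f ^ (k - i) = 0

/-- An ideal is integrally closed if it contains every element integral over it. -/
def IdealIsIntegrallyClosed {R : Type} [CommRing R] (I : Ideal R) : Prop :=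
  ∀ f : R, IsIntegralOverIdeal I f → f ∈ I

set_option maxHeartbeats 2000000 in
/-- Two nontrivial edges which are either adjacent or at distance ≥ 3 give an element
integral over the edge ideal but not in it. -/
lemma key_lemma (K : Type) [Field K] (m : ℕ) (w : Fin (m + 1) → ℕ) (hw : ∀ i, 1 ≤ w i)
    (p q : Fin (m + 1)) (hp : 2 ≤ w p) (hq : 2 ≤ w q)
    (hpq : (q : ℕ) = (p : ℕ) + 1 ∨ (p : ℕ) + 3 ≤ (q : ℕ))
    (hic : IdealIsIntegrallyClosed (Ideal.span (Set.range fun i : Fin (m + 1) =>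
      ((X i.castSucc * X i.succ : MvPolynomial (Fin (m + 2)) K) ^ w i)))) : False := by
  classical
  set s : Fin (m + 1) → (Fin (m + 2) →₀ ℕ) := fun i =>
    Finsupp.single i.castSucc (w i) + Finsupp.single i.succ (w i) with hs
  have gen_eq : ∀ i : Fin (m + 1),
      ((X i.castSucc * X i.succ : MvPolynomial (Fin (m + 2)) K) ^ w i) = monomial (s i) 1 := by
    intro i
    rw [hs, X, X, monomial_mul, monomial_pow]
    simp [Finsupp.smul_single, smul_add]
  have hspan : (Set.range fun i : Fin (m + 1) =>
      ((X i.castSucc * X i.succ : MvPolynomial (Fin (m + 2)) K) ^ w i))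
      = (fun e => monomial e (1 : K)) '' Set.range s := by
    rw [← Set.range_comp]
    exact congrArg Set.range (funext gen_eq)
  set I : Ideal (MvPolynomial (Fin (m + 2)) K) :=
    Ideal.span (Set.range fun i : Fin (m + 1) =>
      ((X i.castSucc * X i.succ : MvPolynomial (Fin (m + 2)) K) ^ w i)) with hI
  -- the witness monomial exponent
  set d : Fin (m + 2) →₀ ℕ := (s p + s q).mapRange (fun t => (t + 1) / 2) (by norm_num) with hdd
  have hd : ∀ v, d v = ((s p) v + (s q) v + 1) / 2 := by
    intro v
    simp [hdd, Finsupp.mapRange_apply]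
  have hsv : ∀ i v, (s i) v
      = (if (i : ℕ) = (v : ℕ) then w i else 0) + (if (i : ℕ) + 1 = (v : ℕ) then w i else 0) := by
    intro i v
    simp [hs, Finsupp.single_apply, Fin.ext_iff]
  set f : MvPolynomial (Fin (m + 2)) K := monomial d 1 with hf
  -- f is not in I
  have hfI : f ∉ I := by
    intro hmem
    rw [hI, hspan, mem_ideal_span_monomial_image] at hmem
    obtain ⟨e, ⟨j, rfl⟩, hle⟩ := hmem d (by simp [hf, support_monomial])
    have h1 := (Finsupp.le_def.mp hle) j.castSucc
    have h2 := (Finsupp.le_def.mp hle) j.succ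
    have hsj1 : (s j) j.castSucc = w j := by
      rw [hsv]; simp [Fin.ext_iff]
    have hsj2 : (s j) j.succ = w j := by
      rw [hsv]; simp [Fin.ext_iff]
    rw [hsj1, hd, hsv, hsv] at h1
    rw [hsj2, hd, hsv, hsv] at h2
    simp only [Fin.coe_castSucc, Fin.val_succ] at h1 h2
    have hwj := hw j
    by_cases hjp : j = p
    · subst hjp
      clear h2
      rcases hpq with hA | hB <;> split_ifs at h1 <;> omega
    · by_cases hjq : j = q
      · subst hjq
        clear h1
        rcases hpq with hA | hB <;> split_ifs at h2 <;> omega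
      · have hvp : (j : ℕ) ≠ (p : ℕ) := fun h => hjp (Fin.ext h)
        have hvq : (j : ℕ) ≠ (q : ℕ) := fun h => hjq (Fin.ext h)
        rcases hpq with hA | hB <;> split_ifs at h1 h2 <;> omega
  -- f is integral over I
  have hrle : s p + s q ≤ d + d := by
    rw [Finsupp.le_def]
    intro v
    have := hd v
    simp only [Finsupp.add_apply] at this ⊢
    omega
  have hgp : monomial (s p) (1 : K) ∈ I := by
    rw [← gen_eq]
    exact Ideal.subset_span ⟨p, rfl⟩
  have hgq : monomial (s q) (1 : K) ∈ I := by
    rw [← gen_eq]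
    exact Ideal.subset_span ⟨q, rfl⟩
  have hf2 : f ^ 2 = monomial (d + d - (s p + s q)) 1 *
      (monomial (s p) 1 * monomial (s q) 1) := by
    have e1 : d + d - (s p + s q) + (s p + s q) = d + d := tsub_add_cancel_of_le hrle
    rw [hf, pow_two, monomial_mul, monomial_mul, monomial_mul, e1]
    norm_num
  have hmem2 : f ^ 2 ∈ I ^ 2 := by
    rw [hf2, pow_two]
    exact Ideal.mul_mem_left _ _ (Ideal.mul_mem_mul hgp hgq)
  have hint : IsIntegralOverIdeal I f := by
    refine ⟨2, two_pos, fun i => if i = 2 then -(f ^ 2) else 0, ?_, ?_⟩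
    · intro i hi
      simp only [Finset.mem_Icc] at hi
      obtain ⟨hi1, hi2⟩ := hi
      interval_cases i
      · simp only [if_neg (by norm_num : (1 : ℕ) ≠ 2)]
        exact zero_mem _
      · simp only [if_pos rfl]
        exact neg_mem hmem2
    · have hIcc : Finset.Icc 1 2 = ({1, 2} : Finset ℕ) := by decide
      rw [hIcc, Finset.sum_insert (by decide), Finset.sum_singleton]
      norm_num
  exact hfI (hic f hint)

/-- if the edge ideal of a non-trivially edge-weighted path
(on `m+2` vertices, edges `e_i = {x_i, x_{i+1}}` of weight `w i`) is integrally
closed, then at most two edges have weight `≥ 2`. -/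
theorem integrally_closed_path_at_most_two_nontrivial_edges
    (K : Type) [Field K] (m : ℕ) (w : Fin (m + 1) → ℕ) (hw : ∀ i, 1 ≤ w i)
    (hnt : ∃ i, 2 ≤ w i)
    (hic : IdealIsIntegrallyClosed (Ideal.span (Set.range fun i : Fin (m + 1) =>
      ((X i.castSucc * X i.succ : MvPolynomial (Fin (m + 2)) K) ^ w i)))) :
    (Finset.univ.filter fun i : Fin (m + 1) => 2 ≤ w i).card ≤ 2 := by
  by_contra h
  push_neg at h
  obtain ⟨t, hts, htc⟩ := Finset.exists_subset_card_eq h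
  rw [Finset.card_eq_three] at htc
  obtain ⟨a, b, c, hab, hac, hbc, rfl⟩ := htc
  have ha : 2 ≤ w a := (Finset.mem_filter.mp (hts (by simp))).2
  have hb : 2 ≤ w b := (Finset.mem_filter.mp (hts (by simp))).2
  have hc : 2 ≤ w c := (Finset.mem_filter.mp (hts (by simp))).2
  have key : ∀ p q : Fin (m + 1), 2 ≤ w p → 2 ≤ w q →
      ((q : ℕ) = (p : ℕ) + 1 ∨ (p : ℕ) + 3 ≤ (q : ℕ)) → False :=
    fun p q h1 h2 h3 => key_lemma K m w hw p q h1 h2 h3 hic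
  have hvab : (a : ℕ) ≠ (b : ℕ) := fun h' => hab (Fin.ext h')
  have hvac : (a : ℕ) ≠ (c : ℕ) := fun h' => hac (Fin.ext h')
  have hvbc : (b : ℕ) ≠ (c : ℕ) := fun h' => hbc (Fin.ext h')
  -- get an ordered triple
  obtain ⟨x, y, z, hx, hy, hz, hxy, hyz⟩ :
      ∃ x y z : Fin (m + 1), 2 ≤ w x ∧ 2 ≤ w y ∧ 2 ≤ w z ∧ (x : ℕ) < y ∧ (y : ℕ) < z := by
    rcases hvab.lt_or_gt with h1 | h1 <;> rcases hvac.lt_or_gt with h2 | h2 <;>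
      rcases hvbc.lt_or_gt with h3 | h3
    · exact ⟨a, b, c, ha, hb, hc, h1, h3⟩
    · exact ⟨a, c, b, ha, hc, hb, h2, h3⟩
    · omega
    · exact ⟨c, a, b, hc, ha, hb, h2, h1⟩
    · exact ⟨b, a, c, hb, ha, hc, h1, h2⟩
    · omega
    · exact ⟨b, c, a, hb, hc, ha, h3, h2⟩
    · exact ⟨c, b, a, hc, hb, ha, h3, h1⟩
  by_cases h1 : (y : ℕ) = (x : ℕ) + 1
  · exact key x y hx hy (Or.inl h1)
  by_cases h2 : (z : ℕ) = (y : ℕ) + 1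
  · exact key y z hy hz (Or.inl h2)
  · exact key x z hx hz (Or.inr (by omega))
end

section
/- Let S = K[x_1,...,x_4] and I = ((x_1 x_2)^{w_1}, x_2 x_3, (x_3 x_4)^{w_3}) with w_1 ≥ w_3 ≥ 1 and w_1 ≥ 2. Then reg(S/I) = 2w_1 - 1 and depth(S/I) = 2. -/
/-!
Write `I = (a x, x y, c y)` with `x = x_2`, `y = x_3`, `a = x_1^{w_1} x_2^{w_1-1}` and
`c = x_3^{w_3-1} x_4^{w_3}`. Since `x y` and `c y` are multiples of `y` while `a x` is not, every
homogeneous element of `I` of degree `< 2 w_1` is divisible by `y`; hence every resolution of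
`S/I` has a generator in degree `≥ 2 w_1`, i.e. `reg(S/I) ≥ 2 w_1 - 1`. A resolution of length
at most one would make `F_0 → S` injective, so `F_0` would have rank one and its generator would
divide `x y`, contradicting this degree bound when `w_1 ≥ 2`; so `pd(S/I) ≥ 2`.

Conversely, as `x` and `y` are prime, the syzygies of `(a x, x y, c y)` are generated by
`(y, -a, 0)` and `(0, c, -x)`, which are independent. This gives the resolution
`0 → S(-2w_1-1) ⊕ S(-2w_3-1) → S(-2w_1) ⊕ S(-2) ⊕ S(-2w_3) → S`, of length two and, for
`w_3 ≤ w_1`, of regularity `2 w_1 - 1`.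
-/

open MvPolynomial

noncomputable section

namespace EWGraph

variable (K : Type) [Field K]

/-- The polynomial ring `K[x_1,…,x_n]`. -/
abbrev Poly (n : ℕ) := MvPolynomial (Fin n) K

variable {K}

/-- `g` is the degree-`d` part of a twisted copy `S(-tw)` of the polynomial ring:
it is homogeneous of degree `d - tw` (and `0` if `d - tw < 0`). -/
def PieceHomog {n : ℕ} (tw d : ℤ) (g : Poly K n) : Prop :=
  if 0 ≤ d - tw then g.IsHomogeneous (d - tw).toNat else g = 0

/-- The augmentation map `S^m → S` sending the `k`-th basis vector to `g k`. -/
def aug {n m : ℕ} (g : Fin m → Poly K n) : (Fin m → Poly K n) →ₗ[Poly K n] Poly K n where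
  toFun v := ∑ k, v k * g k
  map_add' u v := by simp [add_mul, Finset.sum_add_distrib]
  map_smul' c v := by simp [Finset.mul_sum, mul_assoc]

/-- A graded free resolution
`⋯ → F_1 → F_0 → S → S/I → 0` of `S/I`, where `F_i = ⊕_k S(-t i k)` has rank `r i`,
all differentials are given by homogeneous matrices, the image of `F_0 → S` is `I`,
and the complex is exact in positive degrees. -/
structure GradedRes {n : ℕ} (I : Ideal (Poly K n)) where
  r : ℕ → ℕ
  t : (i : ℕ) → Fin (r i) → ℤ
  g : Fin (r 0) → Poly K n
  ghom : ∀ k, PieceHomog 0 (t 0 k) (g k)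
  gspan : Ideal.span (Set.range g) = I
  d : (i : ℕ) → Matrix (Fin (r i)) (Fin (r (i + 1))) (Poly K n)
  dhom : ∀ i k k', PieceHomog (t i k) (t (i + 1) k') (d i k k')
  exact_zero : LinearMap.ker (aug g) = LinearMap.range (d 0).mulVecLin
  exact_succ : ∀ i, LinearMap.ker (d i).mulVecLin = LinearMap.range (d (i + 1)).mulVecLin

/-- The projective dimension of `S/I`: the smallest possible length of a graded free
resolution of `S/I` (the minimal graded free resolution achieves it). -/
def pdQuot {n : ℕ} (I : Ideal (Poly K n)) : ℕ :=
  sInf {m : ℕ | ∃ F : GradedRes I, ∀ i : ℕ, m ≤ i → F.r i = 0}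

/-- The depth of `S/I` with respect to the graded maximal ideal; by the
Auslander–Buchsbaum formula it equals `n - pd(S/I)`. -/
def depthQuot {n : ℕ} (I : Ideal (Poly K n)) : ℕ := n - pdQuot I

/-- The Castelnuovo–Mumford regularity `reg(S/I) = max { j - i : β_{i,j}(S/I) ≠ 0 }`:
the smallest `ρ` such that some (equivalently, the minimal) graded free resolution of
`S/I` has all twists in homological degree `i` bounded by `i + ρ`. (The free module
`F_i` above sits in homological degree `i + 1` of the resolution of `S/I`.) -/
def regQuot {n : ℕ} (I : Ideal (Poly K n)) : ℕ :=
  sInf {ρ : ℕ | ∃ F : GradedRes I, ∀ (i : ℕ) (k : Fin (F.r i)), F.t i k ≤ (ρ : ℤ) + i + 1}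

end EWGraph

namespace MvPolynomial

variable {σ R : Type*}

section CommSemiring
variable [CommSemiring R]

theorem X_dvd_iff_forall_coeff_eq_zero {i : σ} {f : MvPolynomial σ R} :
    X i ∣ f ↔ ∀ ν : σ →₀ ℕ, ν i = 0 → coeff ν f = 0 := by
  classical
  constructor
  · rintro ⟨q, rfl⟩ ν hν
    rw [coeff_X_mul', if_neg (Finsupp.notMem_support_iff.mpr hν)]
  · intro h
    rw [X_dvd_iff_modMonomial_eq_zero]
    ext ν
    by_cases hle : Finsupp.single i 1 ≤ ν
    · rw [coeff_modMonomial_of_le _ hle, coeff_zero]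
    · rw [coeff_modMonomial_of_not_le _ hle, coeff_zero]
      exact h ν (by simpa [Finsupp.single_le_iff, Nat.one_le_iff_ne_zero] using hle)

theorem coeff_mul_eq_zero_of_degree_lt {A h : MvPolynomial σ R} {d : ℕ} (hh : h.IsHomogeneous d)
    {ν : σ →₀ ℕ} (hν : ν.degree < d) : coeff ν (A * h) = 0 := by
  classical
  rw [coeff_mul]
  refine Finset.sum_eq_zero fun pq hpq => ?_
  have hle : pq.2 ≤ ν := Finset.HasAntidiagonal.mem_antidiagonal.mp hpq ▸ le_add_self
  rw [hh.coeff_eq_zero ((Finsupp.degree_mono hle).trans_lt hν).ne, mul_zero]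

theorem X_dvd_of_isHomogeneous_of_eq_mul_add {i : σ} {f h A B : MvPolynomial σ R} {m d : ℕ}
    (hh : h.IsHomogeneous d) (hf : f.IsHomogeneous m) (hm : m < d) (hfeq : f = A * h + B * X i) :
    X i ∣ f := by
  refine X_dvd_iff_forall_coeff_eq_zero.mpr fun ν hν => ?_
  by_cases hdeg : ν.degree = m
  · rw [hfeq, coeff_add, coeff_mul_eq_zero_of_degree_lt hh (hdeg ▸ hm), zero_add]
    exact X_dvd_iff_forall_coeff_eq_zero.mp (dvd_mul_left _ _) ν hν
  · exact hf.coeff_eq_zero hdeg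

end CommSemiring

section Domain
variable [CommRing R] [IsDomain R]

theorem X_not_dvd_mul_X {i j : σ} {a : MvPolynomial σ R} (hij : i ≠ j) (hja : ¬ X j ∣ a) :
    ¬ X j ∣ a * X i := by
  rw [X_dvd_mul_iff, X_dvd_X]
  exact fun h => h.elim hja (Ne.symm hij)

theorem X_not_dvd_X_pow_mul_X_pow {i k l : σ} (hik : i ≠ k) (hil : i ≠ l) (p q : ℕ) :
    ¬ (X i : MvPolynomial σ R) ∣ X k ^ p * X l ^ q := by
  intro h
  rcases X_prime.dvd_or_dvd h with h | h
  · exact hik (X_dvd_X.mp (X_prime.dvd_of_dvd_pow h))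
  · exact hil (X_dvd_X.mp (X_prime.dvd_of_dvd_pow h))

end Domain

end MvPolynomial

theorem mul_add_mul_add_mul_eq_zero_iff {R : Type*} [CommRing R] [IsDomain R] {x y a c u v w : R}
    (hx : Prime x) (hy : Prime y) (hyax : ¬ y ∣ a * x) (hxc : ¬ x ∣ c) :
    u * (a * x) + v * (x * y) + w * (c * y) = 0 ↔
      ∃ p q, u = y * p ∧ v = -a * p + c * q ∧ w = -x * q := by
  constructor
  · intro h
    obtain ⟨p, rfl⟩ : y ∣ u :=
      (hy.dvd_or_dvd ⟨-(v * x + w * c), by linear_combination h⟩).resolve_right hyax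
    have h' : p * (a * x) + v * x + w * c = 0 := by
      have : y * (p * (a * x) + v * x + w * c) = 0 := by linear_combination h
      exact (mul_eq_zero.mp this).resolve_left hy.ne_zero
    obtain ⟨q, rfl⟩ : x ∣ w :=
      (hx.dvd_or_dvd ⟨-(p * a + v), by linear_combination h'⟩).resolve_right hxc
    refine ⟨p, -q, rfl, ?_, by ring⟩
    have : x * (v + a * p + c * q) = 0 := by linear_combination h'
    linear_combination (mul_eq_zero.mp this).resolve_left hx.ne_zero
  · rintro ⟨p, q, rfl, rfl, rfl⟩
    ring

theorem Matrix.range_mulVecLin_of_isEmpty {R m l : Type*} [CommSemiring R] [Fintype l] [IsEmpty l]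
    (M : Matrix m l R) : LinearMap.range M.mulVecLin = ⊥ := by
  rw [Subsingleton.elim M.mulVecLin 0, LinearMap.range_zero]

namespace EWGraph

variable {K : Type} [Field K] {n : ℕ}

theorem PieceHomog.of_isHomogeneous {tw d : ℤ} {m : ℕ} {g : Poly K n} (hg : g.IsHomogeneous m)
    (hm : d - tw = m) : PieceHomog tw d g := by
  rw [PieceHomog, if_pos (by omega), hm, Int.toNat_natCast]
  exact hg

theorem PieceHomog.zero (tw d : ℤ) : PieceHomog tw d (0 : Poly K n) := by
  unfold PieceHomog
  split_ifs
  exacts [isHomogeneous_zero _ _ _, rfl]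

namespace GradedRes

variable {I J : Ideal (Poly K n)}

theorem g_mem (F : GradedRes I) (k : Fin (F.r 0)) : F.g k ∈ I :=
  F.gspan.le (Ideal.subset_span ⟨k, rfl⟩)

theorem le_of_twist_le (F : GradedRes I) {d : ℕ} (ht : ∀ k, F.t 0 k ≤ d)
    (hJ : ∀ f ∈ I, ∀ m ≤ d, f.IsHomogeneous m → f ∈ J) : I ≤ J := by
  rw [← F.gspan, Ideal.span_le]
  rintro _ ⟨k, rfl⟩
  have hg := F.ghom k
  unfold PieceHomog at hg
  split_ifs at hg with hpos
  · exact hJ _ (F.g_mem k) _ (by have := ht k; omega) hg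
  · rw [hg]
    exact J.zero_mem

theorem twist_le_of_dvd (F : GradedRes I) (k : Fin (F.r 0)) {f : Poly K n} {d : ℕ} (hf : f ≠ 0)
    (hfd : f.IsHomogeneous d) (hdvd : F.g k ∣ f) : F.t 0 k ≤ d := by
  have hg := F.ghom k
  unfold PieceHomog at hg
  split_ifs at hg with hpos
  · have := hg.totalDegree (ne_zero_of_dvd_ne_zero hf hdvd) ▸
      hfd.totalDegree hf ▸ totalDegree_le_of_dvd_of_isDomain hdvd hf
    omega
  · exact absurd (zero_dvd_iff.mp (hg ▸ hdvd)) hf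

theorem aug_injective_of_r_one_eq_zero (F : GradedRes I) (h : F.r 1 = 0) :
    Function.Injective (aug F.g) := by
  have : IsEmpty (Fin (F.r 1)) := h ▸ Fin.isEmpty'
  rw [← LinearMap.ker_eq_bot, F.exact_zero, Matrix.range_mulVecLin_of_isEmpty]

theorem r_zero_le_one_of_r_one_eq_zero (F : GradedRes I) (h : F.r 1 = 0) : F.r 0 ≤ 1 :=
  let e := (LinearEquiv.funUnique (Fin 1) (Poly K n) (Poly K n)).symm
  le_of_fin_injective _ (e.toLinearMap ∘ₗ aug F.g)
    (e.injective.comp (F.aug_injective_of_r_one_eq_zero h))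

theorem g_dvd_of_r_zero_le_one (F : GradedRes I) (h : F.r 0 ≤ 1) (k : Fin (F.r 0)) {f : Poly K n}
    (hf : f ∈ I) : F.g k ∣ f := by
  have : Subsingleton (Fin (F.r 0)) := Fin.subsingleton_iff_le_one.mpr h
  have hrange : Set.range F.g ⊆ {F.g k} := by
    rintro _ ⟨k', rfl⟩
    rw [Subsingleton.elim k' k]
    rfl
  exact Ideal.mem_span_singleton.mp (Ideal.span_mono hrange (F.gspan.ge hf))

end GradedRes

/-- The ideal `(a x, x y, c y)` with `x = X i`, `y = X j`: the edge ideal of a weighted path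
`P^4` whose middle edge `x y` has trivial weight. -/
def midEdgeIdeal (i j : Fin n) (a c : Poly K n) : Ideal (Poly K n) :=
  Ideal.span {a * X i, X i * X j, c * X j}

variable {i j : Fin n} {a c : Poly K n} {da dc : ℕ}

theorem X_dvd_of_mem_midEdgeIdeal (ha : a.IsHomogeneous da) {f : Poly K n}
    (hf : f ∈ midEdgeIdeal i j a c) {m : ℕ} (hfm : f.IsHomogeneous m) (hm : m ≤ da) :
    X j ∣ f := by
  obtain ⟨A, r, hr, rfl⟩ := Ideal.mem_span_insert.mp hf
  have hle : Ideal.span {X i * X j, c * X j} ≤ Ideal.span {X j} := by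
    rw [Ideal.span_le]
    rintro _ (rfl | rfl) <;> exact Ideal.mem_span_singleton.mpr (dvd_mul_left _ _)
  obtain ⟨B, rfl⟩ := Ideal.mem_span_singleton'.mp (hle hr)
  exact X_dvd_of_isHomogeneous_of_eq_mul_add (ha.mul (isHomogeneous_X K i)) hfm (by omega) rfl

theorem GradedRes.exists_twist_gt_of_midEdgeIdeal (hij : i ≠ j) (ha : a.IsHomogeneous da)
    (hja : ¬ X j ∣ a) (F : GradedRes (midEdgeIdeal i j a c)) : ∃ k, (da : ℤ) < F.t 0 k := by
  by_contra! h
  have hle := F.le_of_twist_le h fun f hf m hm hfm =>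
    Ideal.mem_span_singleton.mpr (X_dvd_of_mem_midEdgeIdeal ha hf hfm hm)
  exact X_not_dvd_mul_X hij hja
    (Ideal.mem_span_singleton.mp (hle (Ideal.subset_span (Set.mem_insert _ _))))

def midEdgeRank : ℕ → ℕ
  | 0 => 3
  | 1 => 2
  | _ + 2 => 0

def midEdgeTwist (da dc : ℕ) : (k : ℕ) → Fin (midEdgeRank k) → ℤ
  | 0 => ![(da : ℤ) + 1, 2, (dc : ℤ) + 1]
  | 1 => ![(da : ℤ) + 2, (dc : ℤ) + 2]
  | _ + 2 => Fin.elim0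

/-- The two columns are the syzygies of `(a x, x y)` and `(x y, c y)`; the Koszul syzygy of
`(a x, c y)` is a combination of them. -/
def midEdgeSyzygies (i j : Fin n) (a c : Poly K n) : Matrix (Fin 3) (Fin 2) (Poly K n) :=
  !![X j, 0; -a, c; 0, -X i]

def midEdgeDiff (i j : Fin n) (a c : Poly K n) :
    (k : ℕ) → Matrix (Fin (midEdgeRank k)) (Fin (midEdgeRank (k + 1))) (Poly K n)
  | 0 => midEdgeSyzygies i j a c
  | _ + 1 => fun _ l => Fin.elim0 l

theorem midEdgeSyzygies_mulVec (z : Fin 2 → Poly K n) :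
    (midEdgeSyzygies i j a c).mulVec z = ![X j * z 0, -a * z 0 + c * z 1, -X i * z 1] := by
  funext k
  fin_cases k <;> simp [midEdgeSyzygies, Matrix.mulVec, dotProduct, Fin.sum_univ_two]

theorem ker_aug_eq_range_midEdgeSyzygies (hij : i ≠ j) (hja : ¬ X j ∣ a) (hic : ¬ X i ∣ c) :
    LinearMap.ker (aug ![a * X i, X i * X j, c * X j]) =
      LinearMap.range (midEdgeSyzygies i j a c).mulVecLin := by
  ext w
  have hsyz := mul_add_mul_add_mul_eq_zero_iff (u := w 0) (v := w 1) (w := w 2) X_prime X_prime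
    (X_not_dvd_mul_X hij hja) hic
  simp only [LinearMap.mem_ker, aug, LinearMap.coe_mk, AddHom.coe_mk, Fin.sum_univ_three,
    Matrix.cons_val_zero, Matrix.cons_val_one, Matrix.cons_val_two, Matrix.head_cons,
    Matrix.tail_cons, hsyz, LinearMap.mem_range, Matrix.mulVecLin_apply, midEdgeSyzygies_mulVec]
  constructor
  · rintro ⟨p, q, h0, h1, h2⟩
    refine ⟨![p, q], ?_⟩
    funext k
    fin_cases k <;> simp [h0, h1, h2]
  · rintro ⟨z, rfl⟩
    exact ⟨z 0, z 1, by simp⟩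

theorem ker_midEdgeSyzygies : LinearMap.ker (midEdgeSyzygies i j a c).mulVecLin = ⊥ := by
  refine LinearMap.ker_eq_bot'.mpr fun z hz => ?_
  rw [Matrix.mulVecLin_apply, midEdgeSyzygies_mulVec] at hz
  have h0 := congrFun hz 0
  have h2 := congrFun hz 2
  simp only [Matrix.cons_val_zero, Matrix.cons_val_two, Matrix.tail_cons, Matrix.head_cons,
    Pi.zero_apply, neg_mul, neg_eq_zero, mul_eq_zero, X_ne_zero, false_or] at h0 h2
  funext k
  fin_cases k
  exacts [h0, h2]

theorem pieceHomog_midEdgeSyzygies (ha : a.IsHomogeneous da) (hc : c.IsHomogeneous dc)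
    (k : Fin 3) (l : Fin 2) :
    PieceHomog (![(da : ℤ) + 1, 2, (dc : ℤ) + 1] k) (![(da : ℤ) + 2, (dc : ℤ) + 2] l)
      (midEdgeSyzygies i j a c k l) := by
  fin_cases k <;> fin_cases l <;> simp [midEdgeSyzygies]
  exacts [.of_isHomogeneous (isHomogeneous_X K j) (by push_cast; ring), .zero _ _,
    .of_isHomogeneous ha.neg (by ring), .of_isHomogeneous hc (by ring), .zero _ _,
    .of_isHomogeneous (isHomogeneous_X K i).neg (by push_cast; ring)]

def midEdgeRes (hij : i ≠ j) (ha : a.IsHomogeneous da) (hc : c.IsHomogeneous dc)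
    (hja : ¬ X j ∣ a) (hic : ¬ X i ∣ c) : GradedRes (midEdgeIdeal i j a c) where
  r := midEdgeRank
  t := midEdgeTwist da dc
  g := ![a * X i, X i * X j, c * X j]
  ghom k := by
    fin_cases k
    · exact .of_isHomogeneous (ha.mul (isHomogeneous_X K i)) (by simp [midEdgeTwist]; rfl)
    · exact .of_isHomogeneous ((isHomogeneous_X K i).mul (isHomogeneous_X K j))
        (by simp [midEdgeTwist]; rfl)
    · exact .of_isHomogeneous (hc.mul (isHomogeneous_X K j)) (by simp [midEdgeTwist]; rfl)
  gspan := by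
    show Ideal.span (Set.range ![a * X i, X i * X j, c * X j]) = _
    rw [Matrix.range_cons, Matrix.range_cons, Matrix.range_cons, Matrix.range_empty,
      Set.union_empty, Set.singleton_union, Set.singleton_union, midEdgeIdeal]
  d := midEdgeDiff i j a c
  dhom
    | 0, k, l => pieceHomog_midEdgeSyzygies ha hc k l
    | _ + 1, _, l => Fin.elim0 l
  exact_zero := ker_aug_eq_range_midEdgeSyzygies hij hja hic
  exact_succ
    | 0 => ker_midEdgeSyzygies.trans (Matrix.range_mulVecLin_of_isEmpty (l := Fin 0) _).symm
    | _ + 1 => ((Submodule.subsingleton_iff (Poly K n)).mpr (inferInstanceAs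
        (Subsingleton (Fin 0 → Poly K n)))).elim _ _

theorem midEdgeTwist_le (hdc : dc ≤ da) (hda : 1 ≤ da) (k : ℕ) (l : Fin (midEdgeRank k)) :
    midEdgeTwist da dc k l ≤ (da : ℤ) + k + 1 := by
  revert l
  match k with
  | 0 =>
    show ∀ l : Fin 3, ![(da : ℤ) + 1, 2, (dc : ℤ) + 1] l ≤ da + (0 : ℕ) + 1
    simp [Fin.forall_fin_succ]
    omega
  | 1 =>
    show ∀ l : Fin 2, ![(da : ℤ) + 2, (dc : ℤ) + 2] l ≤ da + (1 : ℕ) + 1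
    simp [Fin.forall_fin_succ]
    omega
  | _ + 2 => exact fun l => Fin.elim0 l

theorem regQuot_midEdgeIdeal (hij : i ≠ j) (ha : a.IsHomogeneous da) (hc : c.IsHomogeneous dc)
    (hja : ¬ X j ∣ a) (hic : ¬ X i ∣ c) (hdc : dc ≤ da) (hda : 1 ≤ da) :
    regQuot (midEdgeIdeal i j a c) = da := by
  have hres : da ∈ {ρ : ℕ | ∃ F : GradedRes (midEdgeIdeal i j a c),
      ∀ (k : ℕ) (l : Fin (F.r k)), F.t k l ≤ (ρ : ℤ) + k + 1} :=
    ⟨midEdgeRes hij ha hc hja hic, midEdgeTwist_le hdc hda⟩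
  refine le_antisymm (Nat.sInf_le hres) (le_csInf ⟨da, hres⟩ ?_)
  rintro ρ ⟨F, hF⟩
  obtain ⟨l, hl⟩ := F.exists_twist_gt_of_midEdgeIdeal hij ha hja
  have := hF 0 l
  omega

theorem pdQuot_midEdgeIdeal (hij : i ≠ j) (ha : a.IsHomogeneous da) (hc : c.IsHomogeneous dc)
    (hja : ¬ X j ∣ a) (hic : ¬ X i ∣ c) (hda : 2 ≤ da) :
    pdQuot (midEdgeIdeal i j a c) = 2 := by
  have hres :
      2 ∈ {m : ℕ | ∃ F : GradedRes (midEdgeIdeal i j a c), ∀ k, m ≤ k → F.r k = 0} :=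
    ⟨midEdgeRes hij ha hc hja hic, fun | _ + 2, _ => rfl⟩
  refine le_antisymm (Nat.sInf_le hres) (le_csInf ⟨2, hres⟩ ?_)
  rintro m ⟨F, hF⟩
  by_contra! hm
  have hr0 := F.r_zero_le_one_of_r_one_eq_zero (hF 1 (by omega))
  obtain ⟨l, hl⟩ := F.exists_twist_gt_of_midEdgeIdeal hij ha hja
  have := F.twist_le_of_dvd l (mul_ne_zero (X_ne_zero i) (X_ne_zero j))
    ((isHomogeneous_X K i).mul (isHomogeneous_X K j))
    (F.g_dvd_of_r_zero_le_one hr0 l (Ideal.subset_span (by simp)))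
  omega

/-- for `I = ((x_1x_2)^{w_1}, x_2x_3, (x_3x_4)^{w_3})` with
`w_1 ≥ w_3 ≥ 1` and `w_1 ≥ 2`: `reg(S/I) = 2w_1 - 1` and `depth(S/I) = 2`. -/
theorem path4_mid_trivial_reg_depth (K : Type) [Field K] (w1 w3 : ℕ)
    (hw3 : 1 ≤ w3) (h13 : w3 ≤ w1) (hw1 : 2 ≤ w1) :
    regQuot (Ideal.span {((X 0 * X 1 : Poly K 4)) ^ w1, X 1 * X 2, (X 2 * X 3) ^ w3}) =
        2 * w1 - 1 ∧
      depthQuot (Ideal.span {((X 0 * X 1 : Poly K 4)) ^ w1, X 1 * X 2, (X 2 * X 3) ^ w3}) = 2 := by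
  obtain ⟨u, rfl⟩ : ∃ u, w1 = u + 1 := ⟨w1 - 1, by omega⟩
  obtain ⟨v, rfl⟩ : ∃ v, w3 = v + 1 := ⟨w3 - 1, by omega⟩
  have hI : Ideal.span {((X 0 * X 1 : Poly K 4)) ^ (u + 1), X 1 * X 2, (X 2 * X 3) ^ (v + 1)} =
      midEdgeIdeal 1 2 (X 0 ^ (u + 1) * X 1 ^ u) (X 2 ^ v * X 3 ^ (v + 1)) := by
    rw [midEdgeIdeal]
    congr 4 <;> ring
  have ha := (isHomogeneous_X_pow (R := K) (0 : Fin 4) (u + 1)).mul (isHomogeneous_X_pow 1 u)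
  have hc := (isHomogeneous_X_pow (R := K) (2 : Fin 4) v).mul (isHomogeneous_X_pow 3 (v + 1))
  have hja : ¬ X 2 ∣ (X 0 ^ (u + 1) * X 1 ^ u : Poly K 4) :=
    X_not_dvd_X_pow_mul_X_pow (by decide) (by decide) _ _
  have hic : ¬ X 1 ∣ (X 2 ^ v * X 3 ^ (v + 1) : Poly K 4) :=
    X_not_dvd_X_pow_mul_X_pow (by decide) (by decide) _ _
  rw [hI, depthQuot, regQuot_midEdgeIdeal (by decide) ha hc hja hic (by omega) (by omega),
    pdQuot_midEdgeIdeal (by decide) ha hc hja hic (by omega)]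
  omega

end EWGraph
end
end

section
/- Let S = K[x_1,...,x_4] and I = (x_1 x_2, (x_2 x_3)^{w_2}, x_3 x_4) with w_2 ≥ 2. Then reg(S/I) = 2w_2 - 1 and depth(S/I) = 1. -/
open MvPolynomial

noncomputable section

namespace EWGraph

variable (K : Type) [Field K]

variable {K}

section Aux

variable {K : Type} [Field K]

/-- generic "matrix-like" map sending basis vector `k` to `u k`. -/
def mapOf {m : ℕ} {α : Type} (u : Fin m → (α → Poly K 4)) :
    (Fin m → Poly K 4) →ₗ[Poly K 4] (α → Poly K 4) where
  toFun v := ∑ k, v k • u k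
  map_add' a b := by
    simp [add_smul, Finset.sum_add_distrib]
  map_smul' c v := by
    simp [Finset.smul_sum, smul_smul]

lemma mapOf_apply {m : ℕ} {α : Type} (u : Fin m → (α → Poly K 4)) (v : Fin m → Poly K 4) :
    mapOf u v = ∑ k, v k • u k := rfl

lemma mapOf_single {m : ℕ} {α : Type} (u : Fin m → (α → Poly K 4)) (k : Fin m) :
    mapOf u (Pi.single k 1) = u k := by
  classical
  simp [mapOf_apply, Pi.single_apply, ite_smul, Finset.sum_ite_eq]

lemma aug_apply {m : ℕ} (g : Fin m → Poly K 4) (v : Fin m → Poly K 4) :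
    aug g v = ∑ k, v k * g k := rfl

lemma aug_single {m : ℕ} (g : Fin m → Poly K 4) (k : Fin m) :
    aug g (Pi.single k 1) = g k := by
  classical
  simp [aug_apply, Pi.single_apply, ite_mul, Finset.sum_ite_eq]

lemma pi_single_sum {m : ℕ} (v : Fin m → Poly K 4) :
    ∑ k, v k • (Pi.single k 1 : Fin m → Poly K 4) = v := by
  classical
  funext j
  simp [Finset.sum_apply, Pi.single_apply, mul_ite, Finset.sum_ite_eq]

lemma linearMap_ext_single {m : ℕ} {N : Type} [AddCommMonoid N] [Module (Poly K 4) N]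
    (φ ψ : (Fin m → Poly K 4) →ₗ[Poly K 4] N)
    (h : ∀ k, φ (Pi.single k 1) = ψ (Pi.single k 1)) : φ = ψ := by
  ext v
  simpa using h v

end Aux
section Kill

variable {K : Type} [Field K]

/-- The algebra map killing the variable `i`. -/
def kill (i : Fin 4) : Poly K 4 →ₐ[K] Poly K 4 :=
  aeval (fun j => if j = i then 0 else X j)

@[simp] lemma kill_X_same (i : Fin 4) : kill (K := K) i (X i) = 0 := by
  simp [kill]

@[simp] lemma kill_X_of_ne (i j : Fin 4) (h : j ≠ i) : kill (K := K) i (X j) = X j := by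
  simp [kill, h]

lemma X_dvd_sub_kill (i : Fin 4) (p : Poly K 4) : X i ∣ p - kill i p := by
  induction p using MvPolynomial.induction_on with
  | C a => simp [kill]
  | add p q hp hq =>
      have := dvd_add hp hq
      rw [map_add]
      convert this using 1
      ring
  | mul_X p j hp =>
      rw [map_mul]
      by_cases h : j = i
      · subst h
        simp only [kill_X_same, mul_zero]
        obtain ⟨q, hq⟩ := hp
        exact ⟨p, by ring⟩
      · rw [kill_X_of_ne i j h]
        obtain ⟨q, hq⟩ := hp
        exact ⟨q * X j, by rw [← sub_mul, hq]; ring⟩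

lemma X_dvd_iff_kill (i : Fin 4) (p : Poly K 4) : X i ∣ p ↔ kill i p = 0 := by
  constructor
  · rintro ⟨q, rfl⟩
    rw [map_mul, kill_X_same, zero_mul]
  · intro h
    simpa [h] using X_dvd_sub_kill i p

lemma X_dvd_of_dvd_mul (i : Fin 4) {p q : Poly K 4} (hq : kill i q ≠ 0)
    (h : X i ∣ p * q) : X i ∣ p := by
  rw [X_dvd_iff_kill] at h ⊢
  rw [map_mul] at h
  exact (mul_eq_zero.mp h).resolve_right hq

end Kill
section Taylor

variable (K : Type) [Field K] (u : ℕ)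

/-- the three generators -/
def tf : Fin 3 → Poly K 4 := ![X 0 * X 1, (X 1 * X 2) ^ (u + 2), X 2 * X 3]

/-- the three syzygies -/
def ts : Fin 3 → Fin 3 → Poly K 4 :=
  ![![X 1 ^ (u + 1) * X 2 ^ (u + 2), -(X 0), 0],
    ![0, X 3, -(X 1 ^ (u + 2) * X 2 ^ (u + 1))],
    ![X 2 * X 3, 0, -(X 0 * X 1)]]

/-- the second syzygy -/
def tτ : Fin 3 → Poly K 4 := ![X 3, X 0, -(X 1 ^ (u + 1) * X 2 ^ (u + 1))]

variable {K u}

lemma taylor_syz (j : Fin 3) : aug (tf K u) (ts K u j) = 0 := by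
  fin_cases j <;> simp [aug_apply, Fin.sum_univ_three, tf, ts] <;> ring

lemma taylor_syz2 : mapOf (ts K u) (tτ K u) = 0 := by
  funext i
  fin_cases i <;>
    simp [mapOf_apply, Finset.sum_apply, Fin.sum_univ_three, ts, tτ] <;> ring

lemma taylor_inj {p : Poly K 4} (h : p • tτ K u = 0) : p = 0 := by
  have h0 : p * X 3 = 0 := by
    simpa [tτ] using congrFun h 0
  exact (mul_eq_zero.mp h0).resolve_right (X_ne_zero _)

private lemma mne : (X 1 ^ (u + 1) * X 2 ^ (u + 1) : Poly K 4) ≠ 0 :=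
  mul_ne_zero (pow_ne_zero _ (X_ne_zero _)) (pow_ne_zero _ (X_ne_zero _))

/-- key division lemma: syzygies of `x0, m', x3` for `m' = x1^{u+1} x2^{u+1}`. -/
lemma lemA {A B C : Poly K 4}
    (hE : A * X 0 + B * (X 1 ^ (u + 1) * X 2 ^ (u + 1)) + C * X 3 = 0) :
    ∃ a b c : Poly K 4,
      A = a * (X 1 ^ (u + 1) * X 2 ^ (u + 1)) + c * X 3 ∧
      B = -(a * X 0) + b * X 3 ∧
      C = -(b * (X 1 ^ (u + 1) * X 2 ^ (u + 1))) - c * X 0 := by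
  -- apply kill 0
  have h := congrArg (kill 0) hE
  simp at h
  have h0 : kill 0 B * (X 1 ^ (u + 1) * X 2 ^ (u + 1)) + kill 0 C * X 3 = 0 := by
    linear_combination h
  -- x3 divides kill 0 B
  have hdvd : (X 3 : Poly K 4) ∣ kill 0 B := by
    refine X_dvd_of_dvd_mul 3 (q := X 1 ^ (u + 1) * X 2 ^ (u + 1)) ?_
      ⟨-(kill 0 C), by linear_combination h0⟩
    have hk : kill (K := K) 3 (X 1 ^ (u + 1) * X 2 ^ (u + 1))
        = X 1 ^ (u + 1) * X 2 ^ (u + 1) := by simp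
    rw [hk]
    exact mne
  obtain ⟨β, hβ⟩ := hdvd
  have hC0 : kill 0 C = -(β * (X 1 ^ (u + 1) * X 2 ^ (u + 1))) := by
    have hz : X 3 * (kill 0 C + β * (X 1 ^ (u + 1) * X 2 ^ (u + 1))) = 0 := by
      linear_combination h0 - (X 1 ^ (u + 1) * X 2 ^ (u + 1)) * hβ
    rcases mul_eq_zero.mp hz with h' | h'
    · exact absurd h' (X_ne_zero _)
    · linear_combination h'
  obtain ⟨B', hB'⟩ := X_dvd_sub_kill 0 B
  obtain ⟨C', hC'⟩ := X_dvd_sub_kill 0 C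
  have hx0 : X 0 * (A + B' * (X 1 ^ (u + 1) * X 2 ^ (u + 1)) + C' * X 3) = 0 := by
    linear_combination hE - (X 1 ^ (u + 1) * X 2 ^ (u + 1)) * hB' - X 3 * hC' - h0
  have hA : A = -(B' * (X 1 ^ (u + 1) * X 2 ^ (u + 1))) - C' * X 3 := by
    rcases mul_eq_zero.mp hx0 with h' | h'
    · exact absurd h' (X_ne_zero _)
    · linear_combination h'
  refine ⟨-B', β, -C', by linear_combination hA, by linear_combination hB' + hβ,
    by linear_combination hC' + hC0⟩

/-- first syzygy computation -/
lemma taylor_T1 {v : Fin 3 → Poly K 4} (hv : aug (tf K u) v = 0) :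
    ∃ w : Fin 3 → Poly K 4, mapOf (ts K u) w = v := by
  have hE : v 0 * (X 0 * X 1) + v 1 * (X 1 * X 2) ^ (u + 2) + v 2 * (X 2 * X 3) = 0 := by
    simpa [aug_apply, Fin.sum_univ_three, tf] using hv
  -- x1 divides v 2
  have h1 : (X 1 : Poly K 4) ∣ v 2 := by
    refine X_dvd_of_dvd_mul 1 (q := X 2 * X 3) ?_
      ⟨-(v 0 * X 0 + v 1 * (X 1 ^ (u + 1) * X 2 ^ (u + 2))), by linear_combination hE⟩
    have hk : kill (K := K) 1 (X 2 * X 3) = X 2 * X 3 := by simp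
    rw [hk]
    exact mul_ne_zero (X_ne_zero _) (X_ne_zero _)
  obtain ⟨V2, hV2⟩ := h1
  -- x2 divides v 0
  have h2 : (X 2 : Poly K 4) ∣ v 0 := by
    refine X_dvd_of_dvd_mul 2 (q := X 0 * X 1) ?_
      ⟨-(v 1 * (X 1 ^ (u + 2) * X 2 ^ (u + 1)) + V2 * (X 1 * X 3)),
        by linear_combination hE - X 2 * X 3 * hV2⟩
    have hk : kill (K := K) 2 (X 0 * X 1) = X 0 * X 1 := by simp
    rw [hk]
    exact mul_ne_zero (X_ne_zero _) (X_ne_zero _)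
  obtain ⟨V0, hV0⟩ := h2
  have hE' : V0 * X 0 + v 1 * (X 1 ^ (u + 1) * X 2 ^ (u + 1)) + V2 * X 3 = 0 := by
    have hz : (X 1 * X 2 : Poly K 4) *
        (V0 * X 0 + v 1 * (X 1 ^ (u + 1) * X 2 ^ (u + 1)) + V2 * X 3) = 0 := by
      linear_combination hE - (X 2 * X 3) * hV2 - (X 0 * X 1) * hV0
    rcases mul_eq_zero.mp hz with h | h
    · exact absurd h (mul_ne_zero (X_ne_zero _) (X_ne_zero _))
    · exact h
  obtain ⟨a, b, c, hA, hB, hC⟩ := lemA hE'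
  refine ⟨![a, b, c], ?_⟩
  funext i
  fin_cases i <;>
      simp [mapOf_apply, Finset.sum_apply, Fin.sum_univ_three, ts]
  · linear_combination -hV0 - X 2 * hA
  · linear_combination -hB
  · linear_combination -hV2 - X 1 * hC

/-- second syzygy computation -/
lemma taylor_T2 {v : Fin 3 → Poly K 4} (hv : mapOf (ts K u) v = 0) :
    ∃ p : Poly K 4, p • tτ K u = v := by
  have c1 := congrFun hv 1
  simp [mapOf_apply, Finset.sum_apply, Fin.sum_univ_three, ts] at c1
  have e1 : v 0 * (-(X 0)) + v 1 * X 3 = 0 := by linear_combination c1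
  have c2 := congrFun hv 2
  simp [mapOf_apply, Finset.sum_apply, Fin.sum_univ_three, ts] at c2
  have e2 : v 1 * (-(X 1 ^ (u + 2) * X 2 ^ (u + 1))) + v 2 * (-(X 0 * X 1)) = 0 := by
    linear_combination c2
  have h3 : (X 3 : Poly K 4) ∣ v 0 := by
    refine X_dvd_of_dvd_mul 3 (q := X 0) ?_ ⟨v 1, by linear_combination -e1⟩
    have hk : kill (K := K) 3 (X 0) = X 0 := by simp
    rw [hk]
    exact X_ne_zero _
  obtain ⟨p, hp⟩ := h3
  have hv1 : v 1 = p * X 0 := by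
    have hz : (X 3 : Poly K 4) * (v 1 - p * X 0) = 0 := by
      linear_combination e1 + X 0 * hp
    rcases mul_eq_zero.mp hz with h | h
    · exact absurd h (X_ne_zero _)
    · linear_combination h
  have hv2 : v 2 = -(p * (X 1 ^ (u + 1) * X 2 ^ (u + 1))) := by
    have hz : (X 0 * X 1 : Poly K 4) * (v 2 + p * (X 1 ^ (u + 1) * X 2 ^ (u + 1))) = 0 := by
      linear_combination -e2 - (X 1 ^ (u + 2) * X 2 ^ (u + 1)) * hv1
    rcases mul_eq_zero.mp hz with h | h
    · exact absurd h (mul_ne_zero (X_ne_zero _) (X_ne_zero _))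
    · linear_combination h
  refine ⟨p, ?_⟩
  funext i
  fin_cases i <;> simp [tτ]
  · linear_combination -hp
  · linear_combination -hv1
  · linear_combination -hv2

end Taylor
section TaylorRes

variable (K : Type) [Field K] (u : ℕ)

/-- ranks of the Taylor resolution -/
abbrev tr : ℕ → ℕ := fun i =>
  match i with
  | 0 => 3
  | 1 => 3
  | 2 => 1
  | _ + 3 => 0

/-- twists of the Taylor resolution -/
def tt : (i : ℕ) → Fin (tr i) → ℤ := fun i =>
  match i with
  | 0 => ![2, 2 * (u : ℤ) + 4, 2]
  | 1 => ![2 * (u : ℤ) + 5, 2 * (u : ℤ) + 5, 4]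
  | 2 => ![2 * (u : ℤ) + 6]
  | _ + 3 => Fin.elim0

/-- differentials of the Taylor resolution -/
def td : (i : ℕ) → Matrix (Fin (tr i)) (Fin (tr (i + 1))) (Poly K 4) := fun i =>
  match i with
  | 0 => Matrix.of fun i j => ts K u j i
  | 1 => Matrix.of fun i _ => tτ K u i
  | 2 => Matrix.of fun _ j => j.elim0
  | _ + 3 => Matrix.of fun i _ => i.elim0

variable {K u}

lemma td0_apply (v : Fin 3 → Poly K 4) :
    (td K u 0).mulVecLin v = mapOf (ts K u) v := by
  funext i
  simp [Matrix.mulVecLin_apply, Matrix.mulVec, dotProduct, td, mapOf_apply,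
    Finset.sum_apply, mul_comm]

lemma td1_apply (v : Fin 1 → Poly K 4) :
    (td K u 1).mulVecLin v = v 0 • tτ K u := by
  funext i
  simp [Matrix.mulVecLin_apply, Matrix.mulVec, dotProduct, td, mul_comm]

lemma ker_aug_tf :
    LinearMap.ker (aug (tf K u)) = LinearMap.range (td K u 0).mulVecLin := by
  ext v
  constructor
  · intro hv
    obtain ⟨w, hw⟩ := taylor_T1 (LinearMap.mem_ker.mp hv)
    exact ⟨w, by rw [td0_apply]; exact hw⟩
  · rintro ⟨w, rfl⟩
    rw [LinearMap.mem_ker, td0_apply, mapOf_apply, map_sum]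
    simp [taylor_syz]

lemma ker_td0 :
    LinearMap.ker (td K u 0).mulVecLin = LinearMap.range (td K u 1).mulVecLin := by
  ext v
  constructor
  · intro hv
    have hv' : mapOf (ts K u) v = 0 := by
      rw [← td0_apply]; exact hv
    obtain ⟨p, hp⟩ := taylor_T2 hv'
    exact ⟨fun _ => p, by rw [td1_apply]; exact hp⟩
  · rintro ⟨y, rfl⟩
    rw [LinearMap.mem_ker, td1_apply, td0_apply, map_smul, taylor_syz2, smul_zero]

lemma ker_td1 :
    LinearMap.ker (td K u 1).mulVecLin = LinearMap.range (td K u 2).mulVecLin := by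
  ext v
  constructor
  · intro hv
    have h : v 0 • tτ K u = 0 := by rw [← td1_apply]; exact hv
    have h0 : v 0 = 0 := taylor_inj h
    have hv0 : v = 0 := funext fun j => by
      have hj : j = 0 := Subsingleton.elim _ _
      rw [hj]; exact h0
    rw [hv0]
    exact ⟨0, map_zero _⟩
  · rintro ⟨y, rfl⟩
    have hy : y = 0 := funext fun j => j.elim0
    rw [hy, map_zero]
    exact Submodule.zero_mem _

lemma exact_high (n : ℕ) :
    LinearMap.ker (td K u (n + 2)).mulVecLin = LinearMap.range (td K u (n + 3)).mulVecLin := by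
  ext x
  have hx : x = 0 := funext fun j => j.elim0
  subst hx
  exact ⟨fun _ => ⟨0, map_zero _⟩, fun _ => Submodule.zero_mem _⟩

lemma piecehomog_of {tw d : ℤ} {g : Poly K 4} (e : ℕ) (h1 : d - tw = (e : ℤ))
    (h2 : g.IsHomogeneous e) : PieceHomog tw d g := by
  unfold PieceHomog
  rw [if_pos (by omega), h1]
  simpa using h2

lemma homog_of_eq {p : Poly K 4} {a b : ℕ} (h : p.IsHomogeneous a) (hab : a = b) :
    p.IsHomogeneous b := hab ▸ h

lemma piecehomog_zero {tw d : ℤ} : PieceHomog tw d (0 : Poly K 4) := by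
  unfold PieceHomog
  split
  · exact isHomogeneous_zero _ _ _
  · rfl

/-- The Taylor resolution as a `GradedRes`. -/
def taylorRes :
    GradedRes (Ideal.span {(X 0 * X 1 : Poly K 4), (X 1 * X 2) ^ (u + 2), X 2 * X 3}) where
  r := tr
  t := tt u
  g := tf K u
  ghom := by
    intro k
    fin_cases k
    · refine piecehomog_of 2 ?_
        (homog_of_eq ((isHomogeneous_X _ _).mul (isHomogeneous_X _ _)) rfl)
      show (2 : ℤ) - 0 = ((2 : ℕ) : ℤ)
      norm_num
    · refine piecehomog_of (2 * (u + 2)) ?_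
        (homog_of_eq (((isHomogeneous_X _ _).mul (isHomogeneous_X _ _)).pow _) (by ring))
      show (2 * (u : ℤ) + 4) - 0 = ((2 * (u + 2) : ℕ) : ℤ)
      push_cast; ring
    · refine piecehomog_of 2 ?_
        (homog_of_eq ((isHomogeneous_X _ _).mul (isHomogeneous_X _ _)) rfl)
      show (2 : ℤ) - 0 = ((2 : ℕ) : ℤ)
      norm_num
  gspan := by
    have h : Set.range (tf K u)
        = {(X 0 * X 1 : Poly K 4), (X 1 * X 2) ^ (u + 2), X 2 * X 3} := by
      show Set.range ![(X 0 * X 1 : Poly K 4), (X 1 * X 2) ^ (u + 2), X 2 * X 3] = _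
      rw [Matrix.range_cons, Matrix.range_cons, Matrix.range_cons_empty,
        Set.singleton_union, Set.singleton_union]
    rw [h]
  d := td K u
  dhom := by
    intro i k k'
    match i with
    | 0 =>
      fin_cases k <;> fin_cases k'
      -- (k, k') = (0, 0) : entry ts 0 0 = X1^{u+1} X2^{u+2}
      · refine piecehomog_of (2 * u + 3) ?_
          (homog_of_eq ((isHomogeneous_X_pow 1 (u + 1)).mul (isHomogeneous_X_pow 2 (u + 2)))
            (by ring))
        show (2 * (u : ℤ) + 5) - 2 = ((2 * u + 3 : ℕ) : ℤ)
        push_cast; ring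
      -- (0, 1) : entry ts 1 0 = 0
      · exact piecehomog_zero
      -- (0, 2) : entry ts 2 0 = X2 * X3
      · refine piecehomog_of 2 ?_
          (homog_of_eq ((isHomogeneous_X _ _).mul (isHomogeneous_X _ _)) rfl)
        show (4 : ℤ) - 2 = ((2 : ℕ) : ℤ)
        norm_num
      -- (1, 0) : entry ts 0 1 = -(X 0)
      · refine piecehomog_of 1 ?_ ((isHomogeneous_X _ _).neg)
        show (2 * (u : ℤ) + 5) - (2 * (u : ℤ) + 4) = ((1 : ℕ) : ℤ)
        norm_num
      -- (1, 1) : entry ts 1 1 = X 3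
      · refine piecehomog_of 1 ?_ (isHomogeneous_X _ _)
        show (2 * (u : ℤ) + 5) - (2 * (u : ℤ) + 4) = ((1 : ℕ) : ℤ)
        norm_num
      -- (1, 2) : entry ts 2 1 = 0
      · exact piecehomog_zero
      -- (2, 0) : entry ts 0 2 = 0
      · exact piecehomog_zero
      -- (2, 1) : entry ts 1 2 = -(X1^{u+2} X2^{u+1})
      · refine piecehomog_of (2 * u + 3) ?_
          (homog_of_eq ((isHomogeneous_X_pow 1 (u + 2)).mul (isHomogeneous_X_pow 2 (u + 1))).neg
            (by ring))
        show (2 * (u : ℤ) + 5) - 2 = ((2 * u + 3 : ℕ) : ℤ)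
        push_cast; ring
      -- (2, 2) : entry ts 2 2 = -(X0 * X1)
      · refine piecehomog_of 2 ?_
          (homog_of_eq ((isHomogeneous_X _ _).mul (isHomogeneous_X _ _)).neg rfl)
        show (4 : ℤ) - 2 = ((2 : ℕ) : ℤ)
        norm_num
    | 1 =>
      fin_cases k <;> fin_cases k'
      · refine piecehomog_of 1 ?_ (isHomogeneous_X _ _)
        show (2 * (u : ℤ) + 6) - (2 * (u : ℤ) + 5) = ((1 : ℕ) : ℤ)
        norm_num
      · refine piecehomog_of 1 ?_ (isHomogeneous_X _ _)
        show (2 * (u : ℤ) + 6) - (2 * (u : ℤ) + 5) = ((1 : ℕ) : ℤ)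
        norm_num
      · refine piecehomog_of (2 * u + 2) ?_
          (homog_of_eq ((isHomogeneous_X_pow 1 (u + 1)).mul (isHomogeneous_X_pow 2 (u + 1))).neg
            (by ring))
        show (2 * (u : ℤ) + 6) - 4 = ((2 * u + 2 : ℕ) : ℤ)
        push_cast; ring
    | 2 => exact k'.elim0
    | n + 3 => exact k.elim0
  exact_zero := ker_aug_tf
  exact_succ := by
    intro i
    match i with
    | 0 => exact ker_td0
    | 1 => exact ker_td1
    | n + 2 => exact exact_high n

end TaylorRes
section RegLower

variable {K : Type} [Field K] {u : ℕ}

lemma deg4 (d : Fin 4 →₀ ℕ) : d.degree = ∑ i : Fin 4, d i := by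
  rw [Finsupp.degree]
  exact Finset.sum_subset (Finset.subset_univ _)
    (fun x _ hx => Finsupp.notMem_support_iff.mp hx)

lemma deg4_add (a b : Fin 4 →₀ ℕ) : (a + b).degree = a.degree + b.degree := by
  simp [deg4, Finset.sum_add_distrib]

/-- the homogeneous components of a multiple of a monomial are multiples of the monomial -/
lemma hc_mul_monomial_mem (p : Poly K 4) (μ : Fin 4 →₀ ℕ) (n : ℕ) :
    homogeneousComponent n (p * monomial μ 1) ∈ Ideal.span {(monomial μ 1 : Poly K 4)} := by
  by_cases hn : μ.degree ≤ n
  · rw [Ideal.mem_span_singleton]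
    refine ⟨homogeneousComponent (n - μ.degree) p, ?_⟩
    rw [mul_comm (monomial μ 1) _]
    ext d
    simp only [coeff_homogeneousComponent, coeff_mul_monomial', mul_one]
    by_cases hμ : μ ≤ d
    · have e : d.degree = (d - μ).degree + μ.degree := by
        conv_lhs => rw [← tsub_add_cancel_of_le hμ]
        exact deg4_add _ _
      by_cases hdn : d.degree = n
      · rw [if_pos hdn, if_pos hμ, if_pos hμ, if_pos (by omega : (d - μ).degree = n - μ.degree)]
      · rw [if_neg hdn, if_pos hμ, if_neg (by omega : ¬ (d - μ).degree = n - μ.degree)]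
    · by_cases hdn : d.degree = n
      · rw [if_pos hdn, if_neg hμ, if_neg hμ]
      · rw [if_neg hdn, if_neg hμ]
  · have h0 : homogeneousComponent n (p * monomial μ 1) = 0 := by
      apply homogeneousComponent_eq_zero'
      intro d hd
      rw [mem_support_iff, coeff_mul_monomial'] at hd
      by_cases hμ : μ ≤ d
      · have e : d.degree = (d - μ).degree + μ.degree := by
          conv_lhs => rw [← tsub_add_cancel_of_le hμ]
          exact deg4_add _ _
        omega
      · rw [if_neg hμ] at hd
        exact absurd rfl hd
    rw [h0]
    exact Submodule.zero_mem _

/-- vanishing of a low homogeneous component of a multiple of a monomial -/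
lemma hc_mul_monomial_zero (p : Poly K 4) (μ : Fin 4 →₀ ℕ) (n : ℕ) (hn : n < μ.degree) :
    homogeneousComponent n (p * monomial μ 1) = 0 := by
  apply homogeneousComponent_eq_zero'
  intro d hd
  rw [mem_support_iff, coeff_mul_monomial'] at hd
  by_cases hμ : μ ≤ d
  · have e : d.degree = (d - μ).degree + μ.degree := by
      conv_lhs => rw [← tsub_add_cancel_of_le hμ]
      exact deg4_add _ _
    omega
  · rw [if_neg hμ] at hd
    exact absurd rfl hd

lemma f0_monomial : (X 0 * X 1 : Poly K 4)
    = monomial (Finsupp.single 0 1 + Finsupp.single 1 1) 1 := by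
  simp [X, monomial_mul]

lemma f2_monomial : (X 2 * X 3 : Poly K 4)
    = monomial (Finsupp.single 2 1 + Finsupp.single 3 1) 1 := by
  simp [X, monomial_mul]

lemma f1_monomial : ((X 1 * X 2) ^ (u + 2) : Poly K 4)
    = monomial ((u + 2) • (Finsupp.single 1 1 + Finsupp.single 2 1)) 1 := by
  simp [X, monomial_mul, monomial_pow]

lemma f1_degree : ((u + 2) • (Finsupp.single 1 1 + Finsupp.single 2 1) : Fin 4 →₀ ℕ).degree
    = 2 * u + 4 := by
  simp [deg4, Fin.sum_univ_four, Finsupp.single_apply]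
  ring

/-- a low-degree homogeneous element of `I` lies in `(x0 x1, x2 x3)` -/
lemma low_mem {h : Poly K 4} {e : ℕ}
    (hmem : h ∈ Ideal.span {(X 0 * X 1 : Poly K 4), (X 1 * X 2) ^ (u + 2), X 2 * X 3})
    (hhom : h.IsHomogeneous e) (he : e < 2 * u + 4) :
    h ∈ Ideal.span {(X 0 * X 1 : Poly K 4), X 2 * X 3} := by
  obtain ⟨A, z, hz, rfl⟩ := Ideal.mem_span_insert.mp hmem
  obtain ⟨B, C, hz'⟩ := Ideal.mem_span_pair.mp hz
  have key : homogeneousComponent e (A * (X 0 * X 1) + z)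
      ∈ Ideal.span {(X 0 * X 1 : Poly K 4), X 2 * X 3} := by
    rw [← hz', map_add, map_add]
    refine Submodule.add_mem _ ?_ (Submodule.add_mem _ ?_ ?_)
    · have := hc_mul_monomial_mem A (Finsupp.single 0 1 + Finsupp.single 1 1) e
      rw [← f0_monomial] at this
      exact Ideal.span_mono (by simp) this
    · rw [f1_monomial,
        hc_mul_monomial_zero B ((u + 2) • (Finsupp.single 1 1 + Finsupp.single 2 1)) e
          (by rw [f1_degree]; omega)]
      exact Submodule.zero_mem _
    · have := hc_mul_monomial_mem C (Finsupp.single 2 1 + Finsupp.single 3 1) e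
      rw [← f2_monomial] at this
      exact Ideal.span_mono (by simp) this
  rwa [homogeneousComponent_of_mem hhom, if_pos rfl] at key

lemma f1_notMem :
    ((X 1 * X 2) ^ (u + 2) : Poly K 4) ∉
      Ideal.span {(X 0 * X 1 : Poly K 4), X 2 * X 3} := by
  intro hmem
  obtain ⟨A, C, hAC⟩ := Ideal.mem_span_pair.mp hmem
  have h := congrArg (eval (![0, 1, 1, 0] : Fin 4 → K)) hAC
  simp at h

/-- lower bound for the regularity -/
lemma reg_lower {ρ : ℕ}
    (F : GradedRes (Ideal.span {(X 0 * X 1 : Poly K 4), (X 1 * X 2) ^ (u + 2), X 2 * X 3}))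
    (hb : ∀ (i : ℕ) (k : Fin (F.r i)), F.t i k ≤ (ρ : ℤ) + i + 1) : 2 * u + 3 ≤ ρ := by
  by_contra hρ
  push_neg at hρ
  have hJ : ∀ k, F.g k ∈ Ideal.span {(X 0 * X 1 : Poly K 4), X 2 * X 3} := by
    intro k
    have hg := F.ghom k
    have hk : F.g k
        ∈ Ideal.span {(X 0 * X 1 : Poly K 4), (X 1 * X 2) ^ (u + 2), X 2 * X 3} := by
      have hk0 : F.g k ∈ Ideal.span (Set.range F.g) :=
        Ideal.subset_span (Set.mem_range_self k)
      rwa [F.gspan] at hk0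
    unfold PieceHomog at hg
    split at hg
    · have hbk := hb 0 k
      refine low_mem hk hg ?_
      omega
    · rw [hg]
      exact Submodule.zero_mem _
  have hle : Ideal.span {(X 0 * X 1 : Poly K 4), (X 1 * X 2) ^ (u + 2), X 2 * X 3}
      ≤ Ideal.span {(X 0 * X 1 : Poly K 4), X 2 * X 3} := by
    have hle0 : Ideal.span (Set.range F.g)
        ≤ Ideal.span {(X 0 * X 1 : Poly K 4), X 2 * X 3} := by
      rw [Ideal.span_le]
      rintro x ⟨k, rfl⟩
      exact hJ k
    rwa [F.gspan] at hle0
  have hf1 : ((X 1 * X 2) ^ (u + 2) : Poly K 4)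
      ∈ Ideal.span {(X 0 * X 1 : Poly K 4), (X 1 * X 2) ^ (u + 2), X 2 * X 3} :=
    Ideal.subset_span (by simp)
  exact f1_notMem (hle hf1)

end RegLower
section PdLower

variable {K : Type} [Field K] {u : ℕ}

lemma range_aug {m : ℕ} (g : Fin m → Poly K 4) :
    LinearMap.range (aug g) = Ideal.span (Set.range g) := by
  apply le_antisymm
  · rintro x ⟨v, rfl⟩
    rw [aug_apply]
    exact Submodule.sum_mem _
      (fun k _ => Ideal.mul_mem_left _ _ (Ideal.subset_span ⟨k, rfl⟩))
  · rw [Ideal.span_le]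
    rintro x ⟨k, rfl⟩
    exact ⟨Pi.single k 1, aug_single g k⟩

lemma range_tf : Set.range (tf K u)
    = {(X 0 * X 1 : Poly K 4), (X 1 * X 2) ^ (u + 2), X 2 * X 3} := by
  show Set.range ![(X 0 * X 1 : Poly K 4), (X 1 * X 2) ^ (u + 2), X 2 * X 3] = _
  rw [Matrix.range_cons, Matrix.range_cons, Matrix.range_cons_empty,
    Set.singleton_union, Set.singleton_union]

/-- no graded resolution of length `< 3` exists -/
lemma pd_lower
    (F : GradedRes (Ideal.span {(X 0 * X 1 : Poly K 4), (X 1 * X 2) ^ (u + 2), X 2 * X 3}))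
    (hr : ∀ i, 2 ≤ i → F.r i = 0) : False := by
  have hr2 : F.r 2 = 0 := hr 2 le_rfl
  -- the range of d 1 is trivial
  have hrange_d1 : LinearMap.range (F.d 1).mulVecLin = ⊥ := by
    refine le_bot_iff.mp ?_
    rintro x ⟨y, rfl⟩
    have hE : IsEmpty (Fin (F.r (1 + 1))) := by
      rw [hr (1 + 1) (by omega)]
      infer_instance
    have hy : y = 0 := funext fun j => hE.elim j
    rw [hy, map_zero]
    exact Submodule.zero_mem ⊥
  -- d 0 is injective
  have hMinj : ∀ x, (F.d 0).mulVecLin x = 0 → x = 0 := by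
    intro x hx
    have hx' : x ∈ LinearMap.ker (F.d 0).mulVecLin := LinearMap.mem_ker.mpr hx
    rw [F.exact_succ 0, hrange_d1] at hx'
    exact Submodule.mem_bot _ |>.mp hx'
  have hIg : LinearMap.range (aug F.g)
      = Ideal.span {(X 0 * X 1 : Poly K 4), (X 1 * X 2) ^ (u + 2), X 2 * X 3} := by
    rw [range_aug, F.gspan]
  have hItf : LinearMap.range (aug (tf K u))
      = Ideal.span {(X 0 * X 1 : Poly K 4), (X 1 * X 2) ^ (u + 2), X 2 * X 3} := by
    rw [range_aug, range_tf]
  -- lift the generators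
  have hu : ∀ i : Fin 3, ∃ x : Fin (F.r 0) → Poly K 4, aug F.g x = tf K u i := by
    intro i
    have h1 : tf K u i
        ∈ Ideal.span {(X 0 * X 1 : Poly K 4), (X 1 * X 2) ^ (u + 2), X 2 * X 3} :=
      Ideal.subset_span (by fin_cases i <;> simp [tf])
    rw [← hIg] at h1
    exact LinearMap.mem_range.mp h1
  choose uv huv using hu
  have hcomp0 : (aug F.g).comp (mapOf uv) = aug (tf K u) :=
    linearMap_ext_single _ _ (fun k => by simp [mapOf_single, huv, aug_single])
  -- lift the syzygies
  have hw : ∀ j : Fin 3, ∃ y : Fin (F.r 1) → Poly K 4,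
      (F.d 0).mulVecLin y = mapOf uv (ts K u j) := by
    intro j
    have haug : aug F.g (mapOf uv (ts K u j)) = 0 := by
      have h1 : aug F.g (mapOf uv (ts K u j)) = aug (tf K u) (ts K u j) := by
        rw [← LinearMap.comp_apply, hcomp0]
      rw [h1, taylor_syz j]
    have hker : mapOf uv (ts K u j) ∈ LinearMap.ker (aug F.g) := LinearMap.mem_ker.mpr haug
    rw [F.exact_zero] at hker
    exact LinearMap.mem_range.mp hker
  choose w hwv using hw
  have hcomp1 : ((F.d 0).mulVecLin).comp (mapOf w) = (mapOf uv).comp (mapOf (ts K u)) :=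
    linearMap_ext_single _ _ (fun j => by simp [mapOf_single, hwv])
  have hφ1τ : mapOf w (tτ K u) = 0 := by
    apply hMinj
    have h1 : (F.d 0).mulVecLin (mapOf w (tτ K u))
        = (mapOf uv) (mapOf (ts K u) (tτ K u)) := by
      rw [← LinearMap.comp_apply, hcomp1, LinearMap.comp_apply]
    rw [h1, taylor_syz2, map_zero]
  -- comparison in the other direction
  have hv : ∀ k : Fin (F.r 0), ∃ z : Fin 3 → Poly K 4, aug (tf K u) z = F.g k := by
    intro k
    have hk0 : F.g k ∈ Ideal.span (Set.range F.g) :=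
      Ideal.subset_span (Set.mem_range_self k)
    rw [F.gspan] at hk0
    exact LinearMap.mem_range.mp ((SetLike.ext_iff.mp hItf _).mpr hk0)
  choose vv hvv using hv
  have hψid : (aug (tf K u)).comp (mapOf vv) = aug F.g :=
    linearMap_ext_single _ _ (fun k => by simp [mapOf_single, hvv, aug_single])
  have hω : ∀ l : Fin (F.r 1), ∃ q : Fin 3 → Poly K 4,
      mapOf (ts K u) q = mapOf vv ((F.d 0).mulVecLin (Pi.single l 1)) := by
    intro l
    have h1 : aug (tf K u) (mapOf vv ((F.d 0).mulVecLin (Pi.single l 1))) = 0 := by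
      rw [← LinearMap.comp_apply, hψid]
      have h2 : (F.d 0).mulVecLin (Pi.single l 1) ∈ LinearMap.ker (aug F.g) := by
        rw [F.exact_zero]
        exact ⟨Pi.single l 1, rfl⟩
      exact LinearMap.mem_ker.mp h2
    have h2 : mapOf vv ((F.d 0).mulVecLin (Pi.single l 1))
        ∈ LinearMap.ker (aug (tf K u)) := LinearMap.mem_ker.mpr h1
    rw [ker_aug_tf] at h2
    obtain ⟨y, hy⟩ := LinearMap.mem_range.mp h2
    rw [td0_apply] at hy
    exact ⟨y, hy⟩
  choose ω hω using hω
  have hψ1 : (mapOf (ts K u)).comp (mapOf ω) = (mapOf vv).comp ((F.d 0).mulVecLin) :=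
    linearMap_ext_single _ _ (fun l => by simp [mapOf_single, hω])
  -- homotopy in degree 0
  have hh0 : ∀ i : Fin 3, ∃ h : Fin 3 → Poly K 4,
      mapOf (ts K u) h = mapOf vv (uv i) - Pi.single i 1 := by
    intro i
    have h1 : aug (tf K u) (mapOf vv (uv i) - Pi.single i 1) = 0 := by
      rw [map_sub, ← LinearMap.comp_apply, hψid, huv, aug_single, sub_self]
    have h2 : mapOf vv (uv i) - Pi.single i 1 ∈ LinearMap.ker (aug (tf K u)) :=
      LinearMap.mem_ker.mpr h1
    rw [ker_aug_tf] at h2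
    obtain ⟨y, hy⟩ := LinearMap.mem_range.mp h2
    rw [td0_apply] at hy
    exact ⟨y, hy⟩
  choose hh hhh using hh0
  have hcomp2 : (mapOf (ts K u)).comp (mapOf hh)
      = (mapOf vv).comp (mapOf uv) - LinearMap.id :=
    linearMap_ext_single _ _ (fun i => by simp [mapOf_single, hhh])
  -- the homotopy defect in degree 1 lies in the kernel of `mapOf ts`
  have hyker : ∀ j : Fin 3,
      mapOf (ts K u) (mapOf ω (w j) - Pi.single j 1 - mapOf hh (ts K u j)) = 0 := by
    intro j
    have e1 : mapOf (ts K u) (mapOf ω (w j)) = mapOf vv (mapOf uv (ts K u j)) := by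
      rw [← LinearMap.comp_apply, hψ1, LinearMap.comp_apply, hwv]
    have e2 : mapOf (ts K u) (mapOf hh (ts K u j))
        = mapOf vv (mapOf uv (ts K u j)) - ts K u j := by
      rw [← LinearMap.comp_apply, hcomp2]
      simp
    rw [map_sub, map_sub, e1, mapOf_single, e2]
    abel
  have hpex : ∀ j : Fin 3, ∃ p : Poly K 4,
      p • tτ K u = mapOf ω (w j) - Pi.single j 1 - mapOf hh (ts K u j) :=
    fun j => taylor_T2 (hyker j)
  choose p hp using hpex
  -- evaluate the relation at τ
  have hYlin : mapOf (fun j => mapOf ω (w j) - Pi.single j 1 - mapOf hh (ts K u j))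
      = (mapOf ω).comp (mapOf w) - LinearMap.id - (mapOf hh).comp (mapOf (ts K u)) :=
    linearMap_ext_single _ _ (fun j => by simp [mapOf_single])
  have hY : mapOf (fun j => mapOf ω (w j) - Pi.single j 1 - mapOf hh (ts K u j)) (tτ K u)
      = -(tτ K u) := by
    rw [hYlin]
    simp only [LinearMap.sub_apply, LinearMap.comp_apply, LinearMap.id_apply, hφ1τ,
      taylor_syz2, map_zero]
    abel
  have hY2 : mapOf (fun j => mapOf ω (w j) - Pi.single j 1 - mapOf hh (ts K u j)) (tτ K u)
      = (∑ j, tτ K u j * p j) • tτ K u := by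
    have hterm : ∀ j : Fin 3,
        tτ K u j • (mapOf ω (w j) - Pi.single j 1 - mapOf hh (ts K u j))
        = (tτ K u j * p j) • tτ K u := fun j => by rw [← hp j, smul_smul]
    rw [mapOf_apply, Finset.sum_congr rfl (fun j _ => hterm j), ← Finset.sum_smul]
  have hq : ((∑ j, tτ K u j * p j) + 1) • tτ K u = 0 := by
    have h1 : (∑ j, tτ K u j * p j) • tτ K u = -(tτ K u) := hY2.symm.trans hY
    rw [add_smul, one_smul, h1, neg_add_cancel]
  have hq0 : (∑ j, tτ K u j * p j) + 1 = 0 := taylor_inj hq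
  rw [Fin.sum_univ_three] at hq0
  have hc := congrArg constantCoeff hq0
  simp [tτ] at hc

end PdLower
end EWGraph
namespace EWGraph
/-- for `I = (x_1x_2, (x_2x_3)^{w_2}, x_3x_4)` with `w_2 ≥ 2`:
`reg(S/I) = 2w_2 - 1` and `depth(S/I) = 1`. -/
theorem path4_mid_nontrivial_reg_depth (K : Type) [Field K] (w2 : ℕ) (hw2 : 2 ≤ w2) :
    regQuot (Ideal.span {(X 0 * X 1 : Poly K 4), (X 1 * X 2) ^ w2, X 2 * X 3}) =
        2 * w2 - 1 ∧
      depthQuot (Ideal.span {(X 0 * X 1 : Poly K 4), (X 1 * X 2) ^ w2, X 2 * X 3}) = 1 := by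
  obtain ⟨u, rfl⟩ : ∃ u, w2 = u + 2 := ⟨w2 - 2, by omega⟩
  have hpd : pdQuot (Ideal.span {(X 0 * X 1 : Poly K 4), (X 1 * X 2) ^ (u + 2), X 2 * X 3})
      = 3 := by
    unfold pdQuot
    have hmem : 3 ∈ {m : ℕ |
        ∃ F : GradedRes (Ideal.span {(X 0 * X 1 : Poly K 4), (X 1 * X 2) ^ (u + 2), X 2 * X 3}),
          ∀ i : ℕ, m ≤ i → F.r i = 0} := by
      refine ⟨taylorRes (K := K) (u := u), ?_⟩
      intro i hi
      match i, hi with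
      | (n + 3), _ => rfl
    apply le_antisymm (Nat.sInf_le hmem)
    refine le_csInf ⟨3, hmem⟩ ?_
    intro m hm
    by_contra hlt
    push_neg at hlt
    obtain ⟨F, hF⟩ := hm
    exact pd_lower F (fun i hi => hF i (by omega))
  constructor
  · unfold regQuot
    have hmem : 2 * (u + 2) - 1 ∈ {ρ : ℕ |
        ∃ F : GradedRes (Ideal.span {(X 0 * X 1 : Poly K 4), (X 1 * X 2) ^ (u + 2), X 2 * X 3}),
          ∀ (i : ℕ) (k : Fin (F.r i)), F.t i k ≤ (ρ : ℤ) + i + 1} := by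
      refine ⟨taylorRes (K := K) (u := u), ?_⟩
      intro i k
      match i with
      | 0 =>
        fin_cases k
        · show (2 : ℤ) ≤ ((2 * (u + 2) - 1 : ℕ) : ℤ) + ((0 : ℕ) : ℤ) + 1
          omega
        · show 2 * (u : ℤ) + 4 ≤ ((2 * (u + 2) - 1 : ℕ) : ℤ) + ((0 : ℕ) : ℤ) + 1
          omega
        · show (2 : ℤ) ≤ ((2 * (u + 2) - 1 : ℕ) : ℤ) + ((0 : ℕ) : ℤ) + 1
          omega
      | 1 =>
        fin_cases k
        · show 2 * (u : ℤ) + 5 ≤ ((2 * (u + 2) - 1 : ℕ) : ℤ) + ((1 : ℕ) : ℤ) + 1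
          omega
        · show 2 * (u : ℤ) + 5 ≤ ((2 * (u + 2) - 1 : ℕ) : ℤ) + ((1 : ℕ) : ℤ) + 1
          omega
        · show (4 : ℤ) ≤ ((2 * (u + 2) - 1 : ℕ) : ℤ) + ((1 : ℕ) : ℤ) + 1
          omega
      | 2 =>
        fin_cases k
        · show 2 * (u : ℤ) + 6 ≤ ((2 * (u + 2) - 1 : ℕ) : ℤ) + ((2 : ℕ) : ℤ) + 1
          omega
      | n + 3 => exact k.elim0
    apply le_antisymm (Nat.sInf_le hmem)
    refine le_csInf ⟨_, hmem⟩ ?_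
    intro ρ hρ
    obtain ⟨F, hb⟩ := hρ
    have := reg_lower F hb
    omega
  · unfold depthQuot
    rw [hpd]
end EWGraph
end
end

section
/- Let I = ((x_1 x_2)^{w_1}, (x_2 x_3)^{w_2}, ..., (x_{n-1} x_n)^{w_{n-1}}) be the edge ideal of an edge-weighted path on n vertices with w_{n-1} = 1. Then for all t ≥ 2, (I^t : x_{n-1} x_n) = I^{t-1}. -/
/-!
The generators of `I` are monomials, so `I ^ t` is the monomial ideal spanned by the sums of `t`
exponent vectors and the colon becomes a statement about exponent vectors. Write the last edge as
`x_u x_v`; no other generator involves the leaf `x_v`. If a product of `t` generators divides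
`x^a x_u x_v`, drop `x_u x_v` if it is one of them; otherwise none of them involves `x_v`, and
dropping one that involves `x_u` (any one, if none does) leaves `t - 1` generators dividing `x^a`.
-/

open Pointwise

theorem Set.range_pow_eq_image_multiset_prod {ι M : Type*} [CommMonoid M] (f : ι → M)
    (t : ℕ) : Set.range f ^ t = (fun c => (c.map f).prod) '' {c : Multiset ι | c.card = t} := by
  induction t with
  | zero => ext; simp
  | succ t ih =>
    ext m
    simp only [pow_succ, ih, Set.mem_mul, Set.mem_image, Set.mem_ofPred_eq, Set.mem_range,
      Multiset.card_eq_succ_iff]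
    constructor
    · rintro ⟨_, ⟨c, hc, rfl⟩, _, ⟨i, rfl⟩, rfl⟩
      exact ⟨i ::ₘ c, ⟨i, c, rfl, hc⟩, by simp [mul_comm]⟩
    · rintro ⟨_, ⟨i, c, rfl, hc⟩, rfl⟩
      exact ⟨_, ⟨c, hc, rfl⟩, _, ⟨i, rfl⟩, by simp [mul_comm]⟩

theorem Finsupp.multiset_sum_map_apply {ι σ M : Type*} [AddCommMonoid M] (e : ι → σ →₀ M)
    (c : Multiset ι) (s : σ) : (c.map e).sum s = (c.map fun i => e i s).sum := by
  induction c using Multiset.induction_on with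
  | empty => simp
  | cons i c ih => simp [ih]

open Finsupp in
theorem exists_mem_sum_map_erase_le_of_leaf {ι σ : Type*} [DecidableEq ι] {e : ι → σ →₀ ℕ}
    {j : ι} {u v : σ} (hj : e j = single u 1 + single v 1) (hv : ∀ i ≠ j, e i v = 0)
    {c : Multiset ι} (hc : c ≠ 0) {x : σ →₀ ℕ} (hle : (c.map e).sum ≤ x + e j) :
    ∃ i ∈ c, ((c.erase i).map e).sum ≤ x := by
  by_cases hjc : j ∈ c
  · refine ⟨j, hjc, ?_⟩
    rw [← Multiset.cons_erase hjc, Multiset.map_cons, Multiset.sum_cons, add_comm] at hle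
    exact le_of_add_le_add_right hle
  obtain ⟨i, hi, hiu⟩ : ∃ i ∈ c, e i u = 0 → ∀ k ∈ c, e k u = 0 := by
    by_cases hu : ∃ i ∈ c, e i u ≠ 0
    · obtain ⟨i, hi, hiu⟩ := hu
      exact ⟨i, hi, fun h => absurd h hiu⟩
    · push Not at hu
      obtain ⟨i, hi⟩ := Multiset.exists_mem_of_ne_zero hc
      exact ⟨i, hi, fun _ => hu⟩
  refine ⟨i, hi, fun s => ?_⟩
  have hs := hle s
  rw [← Multiset.cons_erase hi, Multiset.map_cons, Multiset.sum_cons] at hs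
  have hsum_zero : ∀ s, (∀ k ∈ c, e k s = 0) → ((c.erase i).map e).sum s = 0 := fun s hs => by
    rw [Finsupp.multiset_sum_map_apply]
    exact Multiset.sum_eq_zero fun _ h => by
      obtain ⟨k, hk, rfl⟩ := Multiset.mem_map.mp h
      exact hs k (Multiset.mem_of_mem_erase hk)
  by_cases hsv : s = v
  · subst hsv
    simp [hsum_zero s fun k hk => hv k (ne_of_mem_of_not_mem hk hjc)]
  by_cases hsu : s = u
  · subst hsu
    by_cases h : e i s = 0
    · simp [hsum_zero s (hiu h)]
    · simp only [Finsupp.add_apply, hj, single_eq_same, single_eq_of_ne hsv] at hs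
      omega
  · simp only [Finsupp.add_apply, hj, single_eq_of_ne hsu, single_eq_of_ne hsv] at hs
    omega

namespace MvPolynomial

variable {σ ι R : Type*} [CommSemiring R]

theorem span_range_monomial_pow (e : ι → σ →₀ ℕ) (t : ℕ) :
    Ideal.span (Set.range fun i => monomial (e i) (1 : R)) ^ t =
      Ideal.span ((fun d => monomial d 1) ''
        ((fun c : Multiset ι => (c.map e).sum) '' {c | c.card = t})) := by
  rw [Ideal.span, Submodule.span_pow, Set.range_pow_eq_image_multiset_prod, Set.image_image]
  congr 2
  funext c
  induction c using Multiset.induction_on with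
  | empty => simp
  | cons i c ih => simp [ih, monomial_mul]

theorem mem_span_range_monomial_pow_iff (e : ι → σ →₀ ℕ) (t : ℕ) {p : MvPolynomial σ R} :
    p ∈ Ideal.span (Set.range fun i => monomial (e i) (1 : R)) ^ t ↔
      ∀ a ∈ p.support, ∃ c : Multiset ι, c.card = t ∧ (c.map e).sum ≤ a := by
  rw [span_range_monomial_pow, mem_ideal_span_monomial_image]
  simp

theorem colon_span_monomial_leaf {e : ι → σ →₀ ℕ} {j : ι} {u v : σ}
    (hj : e j = Finsupp.single u 1 + Finsupp.single v 1) (hv : ∀ i ≠ j, e i v = 0) (t : ℕ) :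
    (Ideal.span (Set.range fun i => monomial (e i) (1 : R)) ^ (t + 1)).colon
        ((Ideal.span {monomial (e j) 1} : Ideal (MvPolynomial σ R)) : Set (MvPolynomial σ R)) =
      Ideal.span (Set.range fun i => monomial (e i) (1 : R)) ^ t := by
  classical
  apply le_antisymm
  · intro r hr
    rw [Ideal.mem_colon_span_singleton, mem_span_range_monomial_pow_iff] at hr
    rw [mem_span_range_monomial_pow_iff]
    intro a ha
    obtain ⟨c, hc, hle⟩ := hr (a + e j) (by
      rw [mem_support_iff, coeff_mul_monomial, mul_one]
      exact mem_support_iff.mp ha)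
    obtain ⟨i, hi, hle'⟩ :=
      exists_mem_sum_map_erase_le_of_leaf hj hv (Multiset.card_pos.mp (by omega)) hle
    exact ⟨c.erase i, by simp [Multiset.card_erase_of_mem hi, hc], hle'⟩
  · intro r hr
    rw [Ideal.mem_colon_span_singleton, pow_succ]
    exact Ideal.mul_mem_mul hr (Ideal.subset_span ⟨j, rfl⟩)

end MvPolynomial

open MvPolynomial

theorem path_colon_last_edge_general (K : Type) [Field K] (m : ℕ) (w : Fin (m + 1) → ℕ)
    (hlast : w (Fin.last m) = 1) (t : ℕ) (ht : 2 ≤ t)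
    (I : Ideal (MvPolynomial (Fin (m + 2)) K))
    (hI : I = Ideal.span (Set.range fun i : Fin (m + 1) =>
      (X i.castSucc * X i.succ) ^ w i)) :
    (I ^ t).colon ((Ideal.span {X ((Fin.last m).castSucc) * X ((Fin.last m).succ)} :
      Ideal (MvPolynomial (Fin (m + 2)) K)) : Set (MvPolynomial (Fin (m + 2)) K)) =
      I ^ (t - 1) := by
  let e (i : Fin (m + 1)) : Fin (m + 2) →₀ ℕ :=
    w i • (Finsupp.single i.castSucc 1 + Finsupp.single i.succ 1)
  have hgen : (fun i : Fin (m + 1) => (X i.castSucc * X i.succ : MvPolynomial _ K) ^ w i) =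
      fun i => monomial (e i) 1 :=
    funext fun i => by rw [X, X, monomial_mul, monomial_pow, one_mul, one_pow]
  have hf : (X (Fin.last m).castSucc * X (Fin.last m).succ : MvPolynomial _ K) =
      monomial (e (Fin.last m)) 1 := by
    simpa [hlast] using congrFun hgen (Fin.last m)
  obtain ⟨s, rfl⟩ : ∃ s, t = s + 1 := ⟨t - 1, by omega⟩
  rw [hI, hgen, hf, Nat.add_sub_cancel]
  refine colon_span_monomial_leaf (u := (Fin.last m).castSucc)
    (v := (Fin.last m).succ) (by simp only [e, hlast, one_smul])
    (fun i hi => ?_) s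
  simp [e, Fin.succ_last, Fin.castSucc_ne_last, hi]

/-- for the edge ideal of an edge-weighted path on `m+2` vertices
with last edge weight `w_{n-1} = 1`, `(I^t : x_{n-1} x_n) = I^{t-1}` for `t ≥ 2`. -/
theorem path_colon_last_edge (K : Type) [Field K] (m : ℕ) (w : Fin (m + 1) → ℕ)
    (hw : ∀ i, 1 ≤ w i) (hlast : w (Fin.last m) = 1) (t : ℕ) (ht : 2 ≤ t)
    (I : Ideal (MvPolynomial (Fin (m + 2)) K))
    (hI : I = Ideal.span (Set.range fun i : Fin (m + 1) =>
      (X i.castSucc * X i.succ) ^ w i)) :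
    (I ^ t).colon ((Ideal.span {X ((Fin.last m).castSucc) * X ((Fin.last m).succ)} :
      Ideal (MvPolynomial (Fin (m + 2)) K)) : Set (MvPolynomial (Fin (m + 2)) K)) =
      I ^ (t - 1) :=
  path_colon_last_edge_general K m w hlast t ht I hI
end

section
/- Let I = ((x_1 x_2)^{w_1}, ..., (x_{n-1} x_n)^{w_{n-1}}) be the edge ideal of an edge-weighted path on n vertices with w_{n-1} = 1. Then for all t ≥ 2, ((I^t : x_n) + (x_{n-1})) = (J^t + (x_{n-1})), where J is the edge ideal of the path restricted to vertices {x_1,...,x_{n-2}} (i.e., J = ((x_1x_2)^{w_1},...,(x_{n-3}x_{n-2})^{w_{n-3}})). -/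
/-!
Every edge of the path other than those of `J` contains `x_{n-1}` and has positive weight,
so `I ⊆ J + (x_{n-1})`, hence `I^t ⊆ J^t + (x_{n-1})`, while `J ⊆ I` gives the reverse
inclusion. It remains to see that `x_n` is a nonzerodivisor modulo `J^t + (x_{n-1})`: this
ideal is extended from the polynomial ring in `x_1, …, x_{n-1}`, and an ideal `𝔞 A[x]` with
`𝔞 ⊆ A` is closed under division by `x`, as one sees coefficientwise.
-/

open MvPolynomial

theorem Ideal.sup_pow_le_pow_sup {R : Type*} [CommRing R] (A B : Ideal R) (t : ℕ) :
    (A ⊔ B) ^ t ≤ A ^ t ⊔ B := by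
  have hπ : Function.Surjective (Ideal.Quotient.mk B) := Ideal.Quotient.mk_surjective
  calc (A ⊔ B) ^ t ≤ (((A ⊔ B) ^ t).map (Ideal.Quotient.mk B)).comap (Ideal.Quotient.mk B) :=
        Ideal.le_comap_map
    _ = ((A ^ t).map (Ideal.Quotient.mk B)).comap (Ideal.Quotient.mk B) := by
        rw [Ideal.map_pow, Ideal.map_pow, Ideal.map_sup, Ideal.map_quotient_self, sup_bot_eq]
    _ = A ^ t ⊔ B := by
        rw [Ideal.comap_map_of_surjective _ hπ, ← RingHom.ker_eq_comap_bot, Ideal.mk_ker]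

theorem Ideal.exists_map_eq_span {R S F : Type*} [Semiring R] [Semiring S] [FunLike F R S]
    [RingHomClass F R S] (φ : F) {s : Set S} (hs : s ⊆ Set.range φ) :
    ∃ Q : Ideal R, Ideal.span s = Q.map φ :=
  ⟨Ideal.span (φ ⁻¹' s), by rw [Ideal.map_span, Set.image_preimage_eq_of_subset hs]⟩

theorem Polynomial.mem_map_C_of_mul_X_mem {A : Type*} [CommSemiring A] {Q : Ideal A}
    {f : Polynomial A} (h : f * X ∈ Q.map C) : f ∈ Q.map C := by
  rw [Ideal.mem_map_C_iff] at h ⊢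
  intro n
  simpa only [coeff_mul_X] using h (n + 1)

namespace MvPolynomial

variable (R : Type*) [CommSemiring R] (n : ℕ)

noncomputable def lastVarEquiv :
    MvPolynomial (Fin (n + 1)) R ≃ₐ[R] Polynomial (MvPolynomial (Fin n) R) :=
  (renameEquiv R finSuccEquivLast).trans (optionEquivLeft R (Fin n))

@[simp]
theorem lastVarEquiv_rename_castSucc (p : MvPolynomial (Fin n) R) :
    lastVarEquiv R n (rename Fin.castSucc p) = Polynomial.C p := by
  induction p using MvPolynomial.induction_on <;> simp_all [lastVarEquiv]

@[simp]
theorem lastVarEquiv_symm_C (p : MvPolynomial (Fin n) R) :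
    (lastVarEquiv R n).symm (Polynomial.C p) = rename Fin.castSucc p :=
  (AlgEquiv.symm_apply_eq _).2 (lastVarEquiv_rename_castSucc R n p).symm

@[simp]
theorem lastVarEquiv_X_last : lastVarEquiv R n (X (Fin.last n)) = Polynomial.X := by
  simp [lastVarEquiv]

variable {R n}

theorem mem_map_rename_castSucc_iff {Q : Ideal (MvPolynomial (Fin n) R)}
    {f : MvPolynomial (Fin (n + 1)) R} :
    f ∈ Q.map (rename Fin.castSucc) ↔ lastVarEquiv R n f ∈ Q.map Polynomial.C := by
  refine ⟨fun hf => ?_, fun hf => ?_⟩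
  · have hle : Q.map (rename Fin.castSucc) ≤ (Q.map Polynomial.C).comap (lastVarEquiv R n) :=
      Ideal.map_le_iff_le_comap.2 fun q hq => by
        simpa using Ideal.mem_map_of_mem Polynomial.C hq
    exact hle hf
  · have hle : Q.map Polynomial.C ≤
        (Q.map (rename Fin.castSucc)).comap (lastVarEquiv R n).symm :=
      Ideal.map_le_iff_le_comap.2 fun q hq => by
        simpa using Ideal.mem_map_of_mem (rename Fin.castSucc) hq
    simpa using hle hf

theorem mem_map_rename_castSucc_of_mul_X_last_mem {Q : Ideal (MvPolynomial (Fin n) R)}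
    {f : MvPolynomial (Fin (n + 1)) R}
    (h : f * X (Fin.last n) ∈ Q.map (rename Fin.castSucc)) :
    f ∈ Q.map (rename Fin.castSucc) := by
  rw [mem_map_rename_castSucc_iff, map_mul, lastVarEquiv_X_last] at h
  exact mem_map_rename_castSucc_iff.2 (Polynomial.mem_map_C_of_mul_X_mem h)

end MvPolynomial

theorem path_colon_vertex_sup_general (K : Type) [Field K] (m : ℕ) (w : Fin (m + 1) → ℕ)
    (hw : ∀ i, 1 ≤ w i) (t : ℕ)
    (I J : Ideal (MvPolynomial (Fin (m + 2)) K))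
    (hI : I = Ideal.span (Set.range fun i : Fin (m + 1) =>
      (X i.castSucc * X i.succ) ^ w i))
    (hJ : J = Ideal.span {p : MvPolynomial (Fin (m + 2)) K |
      ∃ i : Fin (m + 1), (i : ℕ) + 2 ≤ m ∧ p = (X i.castSucc * X i.succ) ^ w i}) :
    ((I ^ t).colon ↑(Ideal.span {X (Fin.last (m + 1))} : Ideal (MvPolynomial (Fin (m + 2)) K))) ⊔
        Ideal.span {X ((Fin.last m).castSucc)} =
      (J ^ t) ⊔ Ideal.span {X ((Fin.last m).castSucc)} := by
  set P : Ideal (MvPolynomial (Fin (m + 2)) K) := Ideal.span {X (Fin.last m).castSucc}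
  have hJI : J ≤ I := by
    rw [hI, hJ]
    exact Ideal.span_mono fun p ⟨i, _, hp⟩ => ⟨i, hp.symm⟩
  have hIJP : I ≤ J ⊔ P := by
    rw [hI, Ideal.span_le]
    rintro _ ⟨i, rfl⟩
    by_cases hi : (i : ℕ) + 2 ≤ m
    · exact Ideal.mem_sup_left (hJ ▸ Ideal.subset_span ⟨i, hi, rfl⟩)
    · refine Ideal.mem_sup_right
        (Ideal.mem_span_singleton.2 (dvd_pow ?_ (Nat.one_le_iff_ne_zero.1 (hw i))))
      obtain hlast | hpen : i = Fin.last m ∨ i.succ = (Fin.last m).castSucc := by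
        simp only [Fin.ext_iff, Fin.val_last, Fin.val_succ, Fin.val_castSucc]
        omega
      · exact hlast ▸ dvd_mul_right _ _
      · exact hpen ▸ dvd_mul_left _ _
  obtain ⟨Q, hQ⟩ : ∃ Q : Ideal (MvPolynomial (Fin (m + 1)) K),
      J ^ t ⊔ P = Q.map (rename Fin.castSucc) := by
    obtain ⟨J₀, hJ₀⟩ : ∃ J₀ : Ideal (MvPolynomial (Fin (m + 1)) K),
        J = J₀.map (rename Fin.castSucc) := by
      rw [hJ]
      refine Ideal.exists_map_eq_span _ ?_
      rintro _ ⟨i, hi, rfl⟩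
      refine ⟨(X i * X ⟨i + 1, by omega⟩) ^ w i, ?_⟩
      simp only [map_pow, map_mul, rename_X]
      rfl
    obtain ⟨P₀, hP₀⟩ : ∃ P₀ : Ideal (MvPolynomial (Fin (m + 1)) K),
        P = P₀.map (rename Fin.castSucc) :=
      Ideal.exists_map_eq_span _ (Set.singleton_subset_iff.2 ⟨X (Fin.last m), rename_X _ _⟩)
    exact ⟨J₀ ^ t ⊔ P₀, by rw [Ideal.map_sup, Ideal.map_pow, ← hJ₀, ← hP₀]⟩
  apply le_antisymm
  · refine sup_le (fun f hf => ?_) le_sup_right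
    have hIt : I ^ t ≤ J ^ t ⊔ P :=
      (Ideal.pow_right_mono hIJP t).trans (Ideal.sup_pow_le_pow_sup J P t)
    rw [hQ] at hIt ⊢
    exact mem_map_rename_castSucc_of_mul_X_last_mem (hIt (Ideal.mem_colon_span_singleton.1 hf))
  · exact sup_le_sup_right ((Ideal.pow_right_mono hJI t).trans Ideal.le_colon) _

/-- for the edge ideal of an edge-weighted path on `n = m+2` vertices
with last edge weight `1`, and `J` the edge ideal of the path on `x_1,…,x_{n-2}`
(edges `e_1,…,e_{n-3}`), we have `(I^t : x_n) + (x_{n-1}) = J^t + (x_{n-1})`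
for all `t ≥ 2`. -/
theorem path_colon_vertex_sup (K : Type) [Field K] (m : ℕ) (w : Fin (m + 1) → ℕ)
    (hw : ∀ i, 1 ≤ w i) (hlast : w (Fin.last m) = 1) (t : ℕ) (ht : 2 ≤ t)
    (I J : Ideal (MvPolynomial (Fin (m + 2)) K))
    (hI : I = Ideal.span (Set.range fun i : Fin (m + 1) =>
      (X i.castSucc * X i.succ) ^ w i))
    (hJ : J = Ideal.span {p : MvPolynomial (Fin (m + 2)) K |
      ∃ i : Fin (m + 1), (i : ℕ) + 2 ≤ m ∧ p = (X i.castSucc * X i.succ) ^ w i}) :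
    ((I ^ t).colon ↑(Ideal.span {X (Fin.last (m + 1))} : Ideal (MvPolynomial (Fin (m + 2)) K))) ⊔
        Ideal.span {X ((Fin.last m).castSucc)} =
      (J ^ t) ⊔ Ideal.span {X ((Fin.last m).castSucc)} :=
  path_colon_vertex_sup_general K m w hw t I J hI hJ
end

section
/- Let I = ((x_1 x_2)^{w_1}, ..., (x_{n-1} x_n)^{w_{n-1}}) be the edge ideal of an edge-weighted path with w_{n-1} = 1, and let J = ((x_1x_2)^{w_1},...,(x_{n-2}x_{n-1})^{w_{n-2}}) be the edge ideal of the path with x_n deleted. Then for all t ≥ 2, ((I^t : x_{n-1}) + (x_n)) = ((J^t : x_{n-1}) + (x_n)). -/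
/-!
Substituting `x_n ↦ 0` kills the last generator `x_{n-1} x_n` of `I` and fixes those of `J`
and `x_{n-1}`, so it maps `I^t : x_{n-1}` into `J^t : x_{n-1}`; since every `f` agrees with its
image modulo `(x_n)`, this gives `⊆`, while `⊇` holds because `J ⊆ I`.
-/

open MvPolynomial

theorem Ideal.colon_span_singleton_sup_eq_of_retraction {R F : Type*} [CommRing R]
    [FunLike F R R] [RingHomClass F R R] {A B C : Ideal R} {y : R} (φ : F) (hBA : B ≤ A)
    (hAB : A.map φ ≤ B) (hC : ∀ f, f - φ f ∈ C) (hy : φ y = y) :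
    A.colon (span {y} : Ideal R) ⊔ C = B.colon (span {y} : Ideal R) ⊔ C := by
  refine le_antisymm (sup_le (fun f hf ↦ ?_) le_sup_right)
    (sup_le_sup_right (Submodule.colon_mono hBA le_rfl) C)
  have hφf : φ f ∈ B.colon (span {y} : Ideal R) := by
    rw [Submodule.mem_colon_span_singleton] at hf ⊢
    simpa [hy] using hAB (mem_map_of_mem φ hf)
  rw [← add_sub_cancel (φ f) f]
  exact add_mem (mem_sup_left hφf) (mem_sup_right (hC f))

namespace MvPolynomial

variable {σ R : Type*} [CommRing R]

theorem sub_aeval_mem {C : Ideal (MvPolynomial σ R)} (g : σ → MvPolynomial σ R)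
    (hg : ∀ j, X j - g j ∈ C) (f : MvPolynomial σ R) : f - aeval g f ∈ C := by
  have : (Ideal.Quotient.mkₐ R C).comp (aeval g) = Ideal.Quotient.mkₐ R C :=
    algHom_ext fun j ↦ by simpa [Ideal.Quotient.eq] using sub_mem_comm_iff.mp (hg j)
  exact Ideal.Quotient.eq.mp (congrArg (· f) this).symm

variable [DecidableEq σ]

noncomputable def substZero (i : σ) : MvPolynomial σ R →ₐ[R] MvPolynomial σ R :=
  aeval (Function.update X i 0)

@[simp]
theorem substZero_X_self (i : σ) : substZero i (X i : MvPolynomial σ R) = 0 := by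
  simp [substZero]

@[simp]
theorem substZero_X_of_ne {i j : σ} (h : j ≠ i) :
    substZero i (X j : MvPolynomial σ R) = X j := by
  simp [substZero, h]

theorem sub_substZero_mem (i : σ) (f : MvPolynomial σ R) :
    f - substZero i f ∈ Ideal.span {X i} := by
  refine sub_aeval_mem _ (fun j ↦ ?_) f
  rcases eq_or_ne j i with rfl | hj
  · simp
  · simp [hj]

end MvPolynomial

theorem map_substZero_last_span_path_le {K : Type*} [CommRing K] {m : ℕ} (w : Fin (m + 1) → ℕ)
    (hlast : w (Fin.last m) ≠ 0) :
    (Ideal.span (Set.range fun i : Fin (m + 1) =>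
      (X i.castSucc * X i.succ : MvPolynomial (Fin (m + 2)) K) ^ w i)).map
      (substZero (Fin.last (m + 1))) ≤
    Ideal.span {p | ∃ i : Fin (m + 1), (i : ℕ) + 1 ≤ m ∧ p = (X i.castSucc * X i.succ) ^ w i} := by
  rw [Ideal.map_span, Ideal.span_le]
  rintro _ ⟨_, ⟨i, rfl⟩, rfl⟩
  by_cases hi : (i : ℕ) + 1 ≤ m
  · have hsucc : i.succ ≠ Fin.last (m + 1) :=
      (Fin.succ_ne_last_iff i).mpr fun h ↦ by simp [h] at hi
    simp only [map_pow, map_mul, substZero_X_of_ne (Fin.castSucc_ne_last i),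
      substZero_X_of_ne hsucc]
    exact Ideal.subset_span ⟨i, hi, rfl⟩
  · obtain rfl : i = Fin.last m := Fin.ext (by simp; omega)
    simp [zero_pow hlast]

theorem path_colon_second_last_general (K : Type) [Field K] (m : ℕ) (w : Fin (m + 1) → ℕ)
    (hlast : w (Fin.last m) = 1) (t : ℕ)
    (I J : Ideal (MvPolynomial (Fin (m + 2)) K))
    (hI : I = Ideal.span (Set.range fun i : Fin (m + 1) =>
      (X i.castSucc * X i.succ) ^ w i))
    (hJ : J = Ideal.span {p : MvPolynomial (Fin (m + 2)) K |
      ∃ i : Fin (m + 1), (i : ℕ) + 1 ≤ m ∧ p = (X i.castSucc * X i.succ) ^ w i}) :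
    ((I ^ t).colon ((Ideal.span {X ((Fin.last m).castSucc)} : Ideal (MvPolynomial (Fin (m + 2)) K)) : Set (MvPolynomial (Fin (m + 2)) K))) ⊔
        Ideal.span {X (Fin.last (m + 1))} =
      ((J ^ t).colon ((Ideal.span {X ((Fin.last m).castSucc)} : Ideal (MvPolynomial (Fin (m + 2)) K)) : Set (MvPolynomial (Fin (m + 2)) K))) ⊔
        Ideal.span {X (Fin.last (m + 1))} := by
  have hJI : J ≤ I := hI ▸ hJ ▸ Ideal.span_mono fun _ ⟨i, _, hp⟩ ↦ ⟨i, hp.symm⟩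
  have hIJ : I.map (substZero (Fin.last (m + 1))) ≤ J :=
    hI ▸ hJ ▸ map_substZero_last_span_path_le w (by omega)
  refine Ideal.colon_span_singleton_sup_eq_of_retraction (substZero (Fin.last (m + 1)))
    (Ideal.pow_right_mono hJI t) ?_ (sub_substZero_mem _)
    (substZero_X_of_ne (Fin.castSucc_ne_last _))
  rw [Ideal.map_pow]
  exact Ideal.pow_right_mono hIJ t

/-- for the edge ideal of an edge-weighted path on `n = m+2` vertices
with last edge weight `1`, and `J` the edge ideal of the path with `x_n` deleted
(edges `e_1,…,e_{n-2}`), we have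
`(I^t : x_{n-1}) + (x_n) = (J^t : x_{n-1}) + (x_n)` for all `t ≥ 2`. -/
theorem path_colon_second_last (K : Type) [Field K] (m : ℕ) (w : Fin (m + 1) → ℕ)
    (hw : ∀ i, 1 ≤ w i) (hlast : w (Fin.last m) = 1) (t : ℕ) (ht : 2 ≤ t)
    (I J : Ideal (MvPolynomial (Fin (m + 2)) K))
    (hI : I = Ideal.span (Set.range fun i : Fin (m + 1) =>
      (X i.castSucc * X i.succ) ^ w i))
    (hJ : J = Ideal.span {p : MvPolynomial (Fin (m + 2)) K |
      ∃ i : Fin (m + 1), (i : ℕ) + 1 ≤ m ∧ p = (X i.castSucc * X i.succ) ^ w i}) :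
    ((I ^ t).colon ((Ideal.span {X ((Fin.last m).castSucc)} : Ideal (MvPolynomial (Fin (m + 2)) K)) : Set (MvPolynomial (Fin (m + 2)) K))) ⊔
        Ideal.span {X (Fin.last (m + 1))} =
      ((J ^ t).colon ((Ideal.span {X ((Fin.last m).castSucc)} : Ideal (MvPolynomial (Fin (m + 2)) K)) : Set (MvPolynomial (Fin (m + 2)) K))) ⊔
        Ideal.span {X (Fin.last (m + 1))} :=
  path_colon_second_last_general K m w hlast t I J hI hJ
end

section
/- Let S = K[x_1,...,x_4] and I = ((x_1x_2)^{w_1}, x_2x_3, (x_3x_4)^{w_3}) with w_1 ≥ w_3 ≥ 2. Then for any t ≥ 2, the colon ideal (I^t : (x_2 x_3)^{t-1}) equals I. -/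
/-!
Both ideals are monomial, so it suffices to compare exponent vectors. Let `u` be a monomial such
that `u (x_2x_3)^{t-1}` is divisible by the product of `i` copies of `(x_1x_2)^{w_1}`, `j` of
`x_2x_3` and `k` of `(x_3x_4)^{w_3}`, with `i + j + k = t`. Either `x_2x_3` divides `u`, or `u`
misses `x_2` or `x_3`. If `u` misses `x_3`, comparing `x_3`-degrees gives `j + w_3 k ≤ t - 1`,
which forces `i > k` since `w_3 ≥ 2`; then the `x_2`-degree of `u` is at least
`w_1 i + j - (t - 1) = (w_1 - 1) i - k + 1 ≥ w_1`, so `(x_1x_2)^{w_1}` divides `u`. The case where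
`u` misses `x_2` is symmetric.
-/

open MvPolynomial
open scoped Pointwise

theorem Set.mem_nsmul_insert_insert_singleton {M : Type*} [AddCommMonoid M] {a b c x : M}
    {n : ℕ} :
    x ∈ n • ({a, b, c} : Set M) ↔ ∃ i j k, i + j + k = n ∧ i • a + j • b + k • c = x := by
  induction n generalizing x with
  | zero => simp [eq_comm]
  | succ n ih =>
    rw [succ_nsmul, Set.mem_add]
    constructor
    · rintro ⟨y, hy, z, hz, rfl⟩
      obtain ⟨i, j, k, hn, rfl⟩ := ih.1 hy
      rcases hz with rfl | rfl | rfl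
      · exact ⟨i + 1, j, k, by omega, by simp only [succ_nsmul]; abel⟩
      · exact ⟨i, j + 1, k, by omega, by simp only [succ_nsmul]; abel⟩
      · exact ⟨i, j, k + 1, by omega, by simp only [succ_nsmul]; abel⟩
    · rintro ⟨i, j, k, hn, rfl⟩
      rcases i with _ | i
      · rcases j with _ | j
        · rcases k with _ | k
          · omega
          · exact ⟨_, ih.2 ⟨0, 0, k, by omega, rfl⟩, c, by simp, by simp [succ_nsmul]⟩
        · exact ⟨_, ih.2 ⟨0, j, k, by omega, rfl⟩, b, by simp, by simp only [succ_nsmul]; abel⟩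
      · exact ⟨_, ih.2 ⟨i, j, k, by omega, rfl⟩, a, by simp, by simp only [succ_nsmul]; abel⟩

noncomputable def edgeExponent {σ : Type*} (p q : σ) : σ →₀ ℕ :=
  Finsupp.single p 1 + Finsupp.single q 1

theorem nsmul_edgeExponent_le_iff {σ : Type*} {p q : σ} (hpq : p ≠ q) {w : ℕ} {e : σ →₀ ℕ} :
    w • edgeExponent p q ≤ e ↔ w ≤ e p ∧ w ≤ e q := by
  classical
  refine ⟨fun h => ⟨by simpa [edgeExponent, hpq] using h p,
    by simpa [edgeExponent, hpq.symm] using h q⟩, fun ⟨hp, hq⟩ x => ?_⟩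
  by_cases hxp : x = p
  · subst hxp; simpa [edgeExponent, hpq] using hp
  · by_cases hxq : x = q
    · subst hxq; simpa [edgeExponent, hxp] using hq
    · simp [edgeExponent, Ne.symm hxp, Ne.symm hxq]

namespace MvPolynomial

variable {σ R : Type*} [CommSemiring R]

theorem image_monomial_one_nsmul (S : Set (σ →₀ ℕ)) (n : ℕ) :
    (monomial · (1 : R)) '' (n • S) = ((monomial · (1 : R)) '' S) ^ n := by
  induction n with
  | zero => simp [Set.singleton_one]
  | succ n ih =>
    rw [succ_nsmul, pow_succ, ← ih]
    exact Set.image_image2_distrib fun a b => by rw [monomial_mul, mul_one]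

theorem span_monomial_one_pow (S : Set (σ →₀ ℕ)) (n : ℕ) :
    Ideal.span ((monomial · (1 : R)) '' S) ^ n =
      Ideal.span ((monomial · (1 : R)) '' (n • S)) := by
  rw [image_monomial_one_nsmul]
  exact Submodule.span_pow _ n

theorem support_mul_monomial_one (p : MvPolynomial σ R) (s : σ →₀ ℕ) :
    (p * monomial s 1).support = p.support.map (addRightEmbedding s) :=
  AddMonoidAlgebra.support_coeff_mul_single p _ (by simp) _

theorem mul_monomial_one_mem_span_monomial_iff {p : MvPolynomial σ R} {d : σ →₀ ℕ}
    {S : Set (σ →₀ ℕ)} :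
    p * monomial d 1 ∈ Ideal.span ((monomial · (1 : R)) '' S) ↔
      ∀ e ∈ p.support, ∃ s ∈ S, s ≤ e + d := by
  simp [mem_ideal_span_monomial_image, support_mul_monomial_one]

theorem X_mul_X_eq_monomial (p q : σ) :
    (X p * X q : MvPolynomial σ R) = monomial (edgeExponent p q) 1 := by
  rw [X, X, monomial_mul, mul_one, edgeExponent]

theorem X_mul_X_pow_eq_monomial (p q : σ) (w : ℕ) :
    (X p * X q : MvPolynomial σ R) ^ w = monomial (w • edgeExponent p q) 1 := by
  rw [X_mul_X_eq_monomial, monomial_pow, one_pow]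

end MvPolynomial

theorem Nat.le_and_le_of_path_bounds {w w' i j k n e e' : ℕ} (hw : 2 ≤ w) (hw' : 2 ≤ w')
    (hn : i + j + k = n + 1) (hk : j + k * w' ≤ n) (he : i * w ≤ e) (he' : i * w + j ≤ e' + n) :
    w ≤ e ∧ w ≤ e' := by
  have : k + 1 ≤ i := by nlinarith
  obtain ⟨i, rfl⟩ : ∃ i', i = i' + 1 := ⟨i - 1, by omega⟩
  constructor <;> nlinarith

theorem path4_exists_generator_le {w1 w3 i j k n : ℕ} (hw1 : 2 ≤ w1) (hw3 : 2 ≤ w3)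
    (hn : i + j + k = n + 1) {e : Fin 4 →₀ ℕ}
    (hle : i • w1 • edgeExponent 0 1 + j • edgeExponent 1 2 + k • w3 • edgeExponent 2 3 ≤
      e + n • edgeExponent 1 2) :
    w1 • edgeExponent 0 1 ≤ e ∨ edgeExponent 1 2 ≤ e ∨ w3 • edgeExponent 2 3 ≤ e := by
  have h0 := hle 0
  have h1 := hle 1
  have h2 := hle 2
  have h3 := hle 3
  simp only [edgeExponent, smul_add, Finsupp.smul_single, smul_eq_mul, mul_one,
    Finsupp.coe_add, Pi.add_apply, Finsupp.single_eq_same, ne_eq, zero_ne_one, not_false_eq_true,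
    Finsupp.single_eq_of_ne, add_zero, Fin.reduceEq, one_ne_zero, zero_add] at h0 h1 h2 h3
  rw [← one_nsmul (edgeExponent 1 2), nsmul_edgeExponent_le_iff (by decide),
    nsmul_edgeExponent_le_iff (by decide), nsmul_edgeExponent_le_iff (by decide)]
  by_cases he2 : e 2 = 0
  · exact Or.inl (Nat.le_and_le_of_path_bounds hw1 hw3 hn (by omega) h0 h1)
  by_cases he1 : e 1 = 0
  · have := Nat.le_and_le_of_path_bounds hw3 hw1 (show k + j + i = n + 1 by omega)
      (show j + i * w1 ≤ n by omega) h3 (show k * w3 + j ≤ e 2 + n by omega)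
    exact Or.inr (Or.inr this.symm)
  exact Or.inr (Or.inl ⟨by omega, by omega⟩)

/-- for `I = ((x_1x_2)^{w_1}, x_2x_3, (x_3x_4)^{w_3})` with
`w_1 ≥ w_3 ≥ 2`, `(I^t : (x_2x_3)^{t-1}) = I` for all `t ≥ 2`. -/
theorem path4_colon_middle_power (K : Type) [Field K] (w1 w3 : ℕ)
    (hw3 : 2 ≤ w3) (h13 : w3 ≤ w1) (t : ℕ) (ht : 2 ≤ t)
    (I : Ideal (MvPolynomial (Fin 4) K))
    (hI : I = Ideal.span {(X 0 * X 1) ^ w1, X 1 * X 2, (X 2 * X 3) ^ w3}) :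
    (I ^ t).colon ((Ideal.span {(X 1 * X 2) ^ (t - 1)} : Ideal (MvPolynomial (Fin 4) K)) : Set (MvPolynomial (Fin 4) K)) = I := by
  obtain ⟨n, rfl⟩ : ∃ n, t = n + 1 := ⟨t - 1, by omega⟩
  rw [Nat.add_sub_cancel]
  have hI' : I = Ideal.span ((monomial · (1 : K)) ''
      {w1 • edgeExponent 0 1, edgeExponent 1 2, w3 • edgeExponent 2 3}) := by
    rw [hI, Set.image_insert_eq, Set.image_insert_eq, Set.image_singleton,
      X_mul_X_pow_eq_monomial, X_mul_X_eq_monomial, X_mul_X_pow_eq_monomial]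
  apply le_antisymm
  · intro f hf
    rw [Ideal.mem_colon_span_singleton, X_mul_X_pow_eq_monomial, hI', span_monomial_one_pow,
      mul_monomial_one_mem_span_monomial_iff] at hf
    rw [hI', mem_ideal_span_monomial_image]
    intro e he
    obtain ⟨s, hs, hle⟩ := hf e he
    obtain ⟨i, j, k, hn, rfl⟩ := Set.mem_nsmul_insert_insert_singleton.1 hs
    simpa using path4_exists_generator_le (by omega) hw3 hn hle
  · intro f hf
    have hmid : (X 1 * X 2 : MvPolynomial (Fin 4) K) ∈ I := hI ▸ Ideal.subset_span (by simp)
    rw [Ideal.mem_colon_span_singleton, pow_succ']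
    exact Ideal.mul_mem_mul hf (Ideal.pow_mem_pow hmid n)
end

section
/- Let S = K[x_1,...,x_4] and I = ((x_1x_2)^{w_1}, x_2x_3, (x_3x_4)^{w_3}) with w_1 ≥ w_3 ≥ 2. Then for any t ≥ 1, (I^t + (x_2x_3)) = ((x_1x_2)^{t w_1}, x_2x_3, (x_3x_4)^{t w_3}). -/
/-!
Write `x = (x₁x₂)^{w₁}`, `y = (x₃x₄)^{w₃}` and `z = x₂x₃`; since `w₁, w₃ ≥ 1`, `z` divides `xy`.
In `S ⧸ (z)` the images of `x` and `y` multiply to zero, so every mixed product in `(x̄, ȳ)^t`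
vanishes and `(x̄, ȳ)^t = (x̄^t, ȳ^t)`. Pulling back along `S → S ⧸ (z)` turns this into
`I^t + (z) = (x^t, z, y^t)`.
-/

open MvPolynomial

namespace Ideal

theorem span_pair_pow_of_mul_eq_zero {R : Type*} [CommSemiring R] {x y : R} (hxy : x * y = 0)
    (t : ℕ) : span {x, y} ^ t = span {x ^ t, y ^ t} := by
  rcases t with _ | t
  · simp
  induction t with
  | zero => simp
  | succ t ih =>
    have hxy' : x * y ^ (t + 1) = 0 := by rw [pow_succ', ← mul_assoc, hxy, zero_mul]
    have hyx' : y * x ^ (t + 1) = 0 := by rw [pow_succ', ← mul_assoc, mul_comm y, hxy, zero_mul]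
    rw [pow_succ', ih]
    simp only [span_insert, mul_sup, sup_mul, span_singleton_mul_span_singleton, hxy', hyx',
      ← pow_succ', span_singleton_zero, bot_sup_eq, sup_bot_eq]

theorem span_triple_pow_sup_span_singleton {R : Type*} [CommRing R] {x y z : R}
    (hz : z ∣ x * y) (t : ℕ) : span {x, z, y} ^ t ⊔ span {z} = span {x ^ t, z, y ^ t} := by
  have hz_le : span {z} ≤ span {x ^ t, z, y ^ t} := span_mono (by simp)
  rw [sup_comm, ← comap_map_quotientMk, ← comap_map_mk hz_le]
  congr 1
  have hmk : Quotient.mk (span {z}) x * Quotient.mk (span {z}) y = 0 := by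
    rwa [← map_mul, Quotient.eq_zero_iff_mem, mem_span_singleton]
  simp only [Ideal.map_pow, map_span, Set.image_insert_eq, Set.image_singleton, map_pow,
    Quotient.mk_singleton_self, Set.insert_comm _ (0 : R ⧸ span {z}), span_insert_zero]
  exact span_pair_pow_of_mul_eq_zero hmk t

end Ideal

theorem path4_power_sup_general (K : Type) [Field K] (w1 w3 : ℕ)
    (hw3 : 2 ≤ w3) (h13 : w3 ≤ w1) (t : ℕ)
    (I : Ideal (MvPolynomial (Fin 4) K))
    (hI : I = Ideal.span {(X 0 * X 1) ^ w1, X 1 * X 2, (X 2 * X 3) ^ w3}) :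
    (I ^ t) ⊔ Ideal.span {X 1 * X 2} =
      Ideal.span {(X 0 * X 1) ^ (t * w1), X 1 * X 2, (X 2 * X 3) ^ (t * w3)} := by
  have hdvd : X 1 * X 2 ∣ (X 0 * X 1 : MvPolynomial (Fin 4) K) ^ w1 * (X 2 * X 3) ^ w3 :=
    mul_dvd_mul (dvd_pow (dvd_mul_left _ _) (by omega)) (dvd_pow (dvd_mul_right _ _) (by omega))
  rw [hI, mul_comm t w1, mul_comm t w3, pow_mul, pow_mul]
  exact Ideal.span_triple_pow_sup_span_singleton hdvd t

/-- for `I = ((x_1x_2)^{w_1}, x_2x_3, (x_3x_4)^{w_3})` with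
`w_1 ≥ w_3 ≥ 2`, for all `t ≥ 1`:
`I^t + (x_2x_3) = ((x_1x_2)^{t w_1}, x_2x_3, (x_3x_4)^{t w_3})`. -/
theorem path4_power_sup (K : Type) [Field K] (w1 w3 : ℕ)
    (hw3 : 2 ≤ w3) (h13 : w3 ≤ w1) (t : ℕ) (ht : 1 ≤ t)
    (I : Ideal (MvPolynomial (Fin 4) K))
    (hI : I = Ideal.span {(X 0 * X 1) ^ w1, X 1 * X 2, (X 2 * X 3) ^ w3}) :
    (I ^ t) ⊔ Ideal.span {X 1 * X 2} =
      Ideal.span {(X 0 * X 1) ^ (t * w1), X 1 * X 2, (X 2 * X 3) ^ (t * w3)} :=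
  path4_power_sup_general K w1 w3 hw3 h13 t I hI
end
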